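/- arXiv:1912.04933 — 4 statements merged into one kernel-verified Lean document; each statement's English description precedes it below -/
import Mathlib

section
/- Let (a_i(q))_{i=0,...,k} and (b_i(q))_{i=0,...,l} be strongly q-log concave sequences of polynomials with nonnegative real coefficients. Define their convolution (c_i(q))_{i=0,...,k+l} by (Σ_i a_i(q) t^i)(Σ_i b_i(q) t^i) = Σ_i c_i(q) t^i. Then (c_i(q))_{i=0,...,k+l} is a strongly q-log concave sequence. -/
open Polynomial Finset

noncomputable section

/-- The number of inversions (the Coxeter length) of a permutation of `Fin n`. -/
def invNum {n : ℕ} (π : Equiv.Perm (Fin n)) : ℕ :=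
  (Finset.univ.filter fun p : Fin n × Fin n => p.1 < p.2 ∧ π p.2 < π p.1).card

/-- The descent set of a permutation, as a set of positive integers (1-indexed positions):
`i ∈ Des(π)` iff `1 ≤ i ≤ n-1` and `π_i > π_{i+1}` in one-line notation. -/
def DesSet {n : ℕ} (π : Equiv.Perm (Fin n)) : Finset ℕ :=
  (Finset.univ.filter fun a : Fin n => ∃ b : Fin n, (a : ℕ) + 1 = (b : ℕ) ∧ π b < π a).image
    fun a : Fin n => (a : ℕ) + 1

/-- The peak set of a permutation (1-indexed positions):
`i ∈ Peak(π)` iff `2 ≤ i ≤ n-1` and `π_{i-1} < π_i > π_{i+1}` in one-line notation. -/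
def PeakSet {n : ℕ} (π : Equiv.Perm (Fin n)) : Finset ℕ :=
  (Finset.univ.filter fun b : Fin n =>
      ∃ a c : Fin n, (a : ℕ) + 1 = (b : ℕ) ∧ (b : ℕ) + 1 = (c : ℕ) ∧ π a < π b ∧ π c < π b).image
    fun b : Fin n => (b : ℕ) + 1

/-- The q-integer `[j]_q = 1 + q + ⋯ + q^(j-1)`. -/
def qNum (j : ℕ) : Polynomial ℝ := ∑ i ∈ Finset.range j, X ^ i

/-- The q-factorial `[n]!_q = [1]_q [2]_q ⋯ [n]_q`. -/
def qFactorial : ℕ → Polynomial ℝ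
  | 0 => 1
  | n + 1 => qFactorial n * qNum (n + 1)

/-- The q-binomial coefficient `[n choose k]_q = [n]!_q / ([k]!_q [n-k]!_q)`.
(The divisor is monic and the division is exact, so `divByMonic` gives the true quotient.) -/
def qBinom (n k : ℕ) : Polynomial ℝ :=
  qFactorial n /ₘ (qFactorial k * qFactorial (n - k))

/-- `(−q;q)_k = (1+q)(1+q²)⋯(1+q^k)`. -/
def qPoch (k : ℕ) : Polynomial ℝ := ∏ i ∈ Finset.range k, (1 + X ^ (i + 1))

/-- `D_S(n,q) = Σ_{π ∈ 𝔖_n, Des(π) = S} q^{ℓ(π)}`. -/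
def Dpoly (S : Finset ℕ) (n : ℕ) : Polynomial ℝ :=
  ∑ π ∈ Finset.univ.filter (fun π : Equiv.Perm (Fin n) => DesSet π = S), X ^ invNum π

/-- `P_S(n,q) = Σ_{π ∈ 𝔖_n, Peak(π) = S} q^{ℓ(π)}`. -/
def Ppoly (S : Finset ℕ) (n : ℕ) : Polynomial ℝ :=
  ∑ π ∈ Finset.univ.filter (fun π : Equiv.Perm (Fin n) => PeakSet π = S), X ^ invNum π

/-- `Q_S(n,q) = Σ_{π ∈ 𝔖_n, Peak(π) ⊇ S} q^{ℓ(π)}`. -/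
def Qpoly (S : Finset ℕ) (n : ℕ) : Polynomial ℝ :=
  ∑ π ∈ Finset.univ.filter (fun π : Equiv.Perm (Fin n) => S ⊆ PeakSet π), X ^ invNum π

/-- The sequence `(a i)` for `lo ≤ i ≤ hi` is strongly q-log concave: it has no internal
zeroes and `a i * a j - a (i-1) * a (j+1)` has nonnegative coefficients for `lo < i ≤ j < hi`. -/
def StronglyQLogConcave (lo hi : ℕ) (a : ℕ → Polynomial ℝ) : Prop :=
  (∀ i j l : ℕ, lo ≤ i → i < j → j < l → l ≤ hi → a i ≠ 0 → a l ≠ 0 → a j ≠ 0) ∧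
  ∀ i j : ℕ, lo < i → i ≤ j → j < hi → ∀ m : ℕ,
    0 ≤ (a i * a j - a (i - 1) * a (j + 1)).coeff m

/-!
Extend `a` and `b` by zero to sequences `A`, `B` on `ℤ`. With nonnegative coefficients, strong
q-log-concavity becomes `A r A s - A (r-1) A (s+1) ≥ 0` for all `r ≤ s` (coefficientwise), and
telescoping gives `B α B β - B (α-t) B (β+t) ≥ 0` whenever `α - β ≤ t`. With
`X(r,s) = A r A s - A (r-1) A (s+1)` one has
`c_m c_n - c_{m-1} c_{n+1} = ∑_{r,s} X(r,s) B(m-r) B(n-s)`. The involution `(r,s) ↦ (s+1,r-1)`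
negates `X`, so twice this sum is `∑ X(r,s) Y(r,s)` with
`Y(r,s) = B(m-r) B(n-s) - B(m-s-1) B(n-r+1)`, which changes sign as well. Hence every term `X Y`
may be evaluated at a pair with `r ≤ s`, where both factors are nonnegative as soon as `m ≤ n`.
Internal zeros: `c_n ≠ 0` iff some `a_p b_{n-p} ≠ 0`, and such witnesses for `c_i` and `c_w`
interpolate to one for any `c_j` with `i ≤ j ≤ w`.
-/

namespace Polynomial

def nonnegCoeffs : Subsemiring ℝ[X] where
  carrier := {p | ∀ m, 0 ≤ p.coeff m}
  mul_mem' {p q} hp hq m := by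
    rw [coeff_mul]
    exact sum_nonneg fun x _ => mul_nonneg (hp x.1) (hq x.2)
  one_mem' m := by
    rw [coeff_one]
    split_ifs <;> norm_num
  add_mem' {p q} hp hq m := by
    rw [coeff_add]
    exact add_nonneg (hp m) (hq m)
  zero_mem' m := by simp

theorem mem_nonnegCoeffs_of_two_mul_mem {p : ℝ[X]} (h : 2 * p ∈ nonnegCoeffs) :
    p ∈ nonnegCoeffs := fun m => by
  have := h m
  rw [coeff_ofNat_mul] at this
  linarith

theorem sum_eq_zero_iff_of_mem_nonnegCoeffs {ι : Type*} {s : Finset ι} {f : ι → ℝ[X]}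
    (hf : ∀ i ∈ s, f i ∈ nonnegCoeffs) : ∑ i ∈ s, f i = 0 ↔ ∀ i ∈ s, f i = 0 := by
  refine ⟨fun h i hi => ext fun m => ?_, sum_eq_zero⟩
  have hm : ∑ j ∈ s, (f j).coeff m = 0 := by rw [← finsetSum_coeff, h, coeff_zero]
  exact (sum_eq_zero_iff_of_nonneg fun j hj => hf j hj m).1 hm i hi

end Polynomial

def extendByZero (k : ℕ) (a : ℕ → ℝ[X]) (p : ℤ) : ℝ[X] :=
  if 0 ≤ p ∧ p ≤ k then a p.toNat else 0

section extendByZero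

variable {k : ℕ} {a : ℕ → ℝ[X]}

theorem extendByZero_eq_zero {p : ℤ} (h : p < 0 ∨ k < p) : extendByZero k a p = 0 :=
  if_neg (by omega)

theorem extendByZero_of_nonneg_of_le {p : ℤ} (h₀ : 0 ≤ p) (hk : p ≤ k) :
    extendByZero k a p = a p.toNat :=
  if_pos ⟨h₀, hk⟩

theorem extendByZero_natCast {i : ℕ} (h : i ≤ k) : extendByZero k a i = a i :=
  if_pos ⟨i.cast_nonneg, by exact_mod_cast h⟩

theorem mem_Icc_of_extendByZero_ne_zero {p : ℤ} (h : extendByZero k a p ≠ 0) :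
    p ∈ Icc (0 : ℤ) k := by
  by_contra hp
  rw [mem_Icc] at hp
  exact h (extendByZero_eq_zero (by omega))

theorem extendByZero_mem_nonnegCoeffs (ha : ∀ i, a i ∈ nonnegCoeffs) (p : ℤ) :
    extendByZero k a p ∈ nonnegCoeffs := by
  unfold extendByZero
  split_ifs
  exacts [ha _, zero_mem _]

theorem StronglyQLogConcave.extendByZero_ne_zero (ha : StronglyQLogConcave 0 k a) {u v w : ℤ}
    (huv : u ≤ v) (hvw : v ≤ w) (hu : extendByZero k a u ≠ 0) (hw : extendByZero k a w ≠ 0) :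
    extendByZero k a v ≠ 0 := by
  have hu' := mem_Icc.1 (mem_Icc_of_extendByZero_ne_zero hu)
  have hw' := mem_Icc.1 (mem_Icc_of_extendByZero_ne_zero hw)
  rcases huv.eq_or_lt with rfl | huv
  · exact hu
  rcases hvw.eq_or_lt with rfl | hvw
  · exact hw
  rw [extendByZero_of_nonneg_of_le hu'.1 hu'.2] at hu
  rw [extendByZero_of_nonneg_of_le hw'.1 hw'.2] at hw
  rw [extendByZero_of_nonneg_of_le (by omega) (by omega)]
  exact ha.1 u.toNat v.toNat w.toNat (by omega) (by omega) (by omega) (by omega) hu hw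

end extendByZero

def StronglyQLogConcaveOnInt (f : ℤ → ℝ[X]) : Prop :=
  ∀ r s, r ≤ s → f r * f s - f (r - 1) * f (s + 1) ∈ nonnegCoeffs

theorem StronglyQLogConcave.onInt_extendByZero {k : ℕ} {a : ℕ → ℝ[X]}
    (hnn : ∀ i, a i ∈ nonnegCoeffs) (ha : StronglyQLogConcave 0 k a) :
    StronglyQLogConcaveOnInt (extendByZero k a) := by
  intro r s hrs
  have hA := extendByZero_mem_nonnegCoeffs (k := k) hnn
  rcases le_or_gt r 0 with hr | hr
  · rw [extendByZero_eq_zero (p := r - 1) (by omega), zero_mul, sub_zero]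
    exact mul_mem (hA r) (hA s)
  rcases le_or_gt (k : ℤ) s with hs | hs
  · rw [extendByZero_eq_zero (p := s + 1) (by omega), mul_zero, sub_zero]
    exact mul_mem (hA r) (hA s)
  rw [extendByZero_of_nonneg_of_le (p := r) (by omega) (by omega),
    extendByZero_of_nonneg_of_le (p := s) (by omega) (by omega),
    extendByZero_of_nonneg_of_le (p := r - 1) (by omega) (by omega),
    extendByZero_of_nonneg_of_le (p := s + 1) (by omega) (by omega),
    show (r - 1).toNat = r.toNat - 1 by omega, show (s + 1).toNat = s.toNat + 1 by omega]
  exact ha.2 r.toNat s.toNat (by omega) (by omega) (by omega)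

namespace StronglyQLogConcaveOnInt

variable {f : ℤ → ℝ[X]}

theorem mul_sub_mul_mem_of_le (hf : StronglyQLogConcaveOnInt f) (t : ℕ) {α β : ℤ}
    (h : α ≤ β) : f α * f β - f (α - t) * f (β + t) ∈ nonnegCoeffs := by
  induction t generalizing α β with
  | zero => simp
  | succ t ih =>
    have telescope : f α * f β - f (α - ↑(t + 1)) * f (β + ↑(t + 1)) =
        (f α * f β - f (α - 1) * f (β + 1)) +
          (f (α - 1) * f (β + 1) - f (α - 1 - t) * f (β + 1 + t)) := by
      rw [show α - ↑(t + 1) = α - 1 - t by push_cast; ring,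
        show β + ↑(t + 1) = β + 1 + t by push_cast; ring]
      ring
    rw [telescope]
    exact add_mem (hf α β h) (ih (by omega))

theorem mul_sub_mul_mem (hf : StronglyQLogConcaveOnInt f) {α β t : ℤ} (ht : 0 ≤ t)
    (h : α - β ≤ t) : f α * f β - f (α - t) * f (β + t) ∈ nonnegCoeffs := by
  rcases le_total α β with hαβ | hβα
  · simpa [Int.toNat_of_nonneg ht] using hf.mul_sub_mul_mem_of_le t.toNat hαβ
  · have key := hf.mul_sub_mul_mem_of_le (t - (α - β)).toNat hβα
    rw [Int.toNat_of_nonneg (by omega), show β - (t - (α - β)) = α - t by ring,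
      show α + (t - (α - β)) = β + t by ring, mul_comm (f β)] at key
    exact key

theorem mul_sub_mul_mul_mul_sub_mul_mem {g : ℤ → ℝ[X]}
    (hf : StronglyQLogConcaveOnInt f) (hg : StronglyQLogConcaveOnInt g) {m n : ℤ} (hmn : m ≤ n)
    (r s : ℤ) : (f r * f s - f (r - 1) * f (s + 1)) *
      (g (m - r) * g (n - s) - g (m - s - 1) * g (n - r + 1)) ∈ nonnegCoeffs := by
  have of_le : ∀ r s, r ≤ s → (f r * f s - f (r - 1) * f (s + 1)) *
      (g (m - r) * g (n - s) - g (m - s - 1) * g (n - r + 1)) ∈ nonnegCoeffs := by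
    intro r s hrs
    have hY := hg.mul_sub_mul_mem (α := m - r) (β := n - s) (t := s - r + 1) (by omega) (by omega)
    rw [show m - r - (s - r + 1) = m - s - 1 by ring,
      show n - s + (s - r + 1) = n - r + 1 by ring] at hY
    exact mul_mem (hf r s hrs) hY
  rcases le_or_gt r s with hrs | hsr
  · exact of_le r s hrs
  obtain rfl | hsr := (Int.add_one_le_iff.2 hsr).eq_or_lt
  · rw [add_sub_cancel_right, mul_comm (f (s + 1)), sub_self, zero_mul]
    exact zero_mem _
  · convert of_le (s + 1) (r - 1) (by omega) using 1
    ring_nf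

end StronglyQLogConcaveOnInt

theorem Finset.sum_Icc_prod_Icc_comp_swap_shift {M : Type*} [AddCommMonoid M] (lo hi : ℤ)
    (F : ℤ × ℤ → M) :
    ∑ p ∈ Icc lo hi ×ˢ Icc (lo - 1) (hi - 1), F (p.2 + 1, p.1 - 1) =
      ∑ p ∈ Icc lo hi ×ˢ Icc (lo - 1) (hi - 1), F p := by
  refine sum_nbij' (fun p => (p.2 + 1, p.1 - 1)) (fun p => (p.2 + 1, p.1 - 1)) ?_ ?_ ?_ ?_ ?_
  · simp only [mem_product, mem_Icc]; omega
  · simp only [mem_product, mem_Icc]; omega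
  all_goals simp

theorem coeff_sum_range_C_mul_X_pow (k : ℕ) (a : ℕ → ℝ[X]) (u : ℕ) :
    (∑ i ∈ range (k + 1), C (a i) * X ^ i).coeff u = extendByZero k a u := by
  simp only [finsetSum_coeff, coeff_C_mul_X_pow, sum_ite_eq, mem_range]
  split_ifs with hu
  · exact (extendByZero_natCast (by omega)).symm
  · exact (extendByZero_eq_zero (by omega)).symm

/-- The coefficient `c_n` of the convolution, at an arbitrary integer index `n`. -/
def convZ (k l : ℕ) (a b : ℕ → ℝ[X]) (n : ℤ) : ℝ[X] :=
  ∑ p ∈ Icc (0 : ℤ) k, extendByZero k a p * extendByZero l b (n - p)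

section convZ

variable {k l : ℕ} {a b : ℕ → ℝ[X]}

theorem convZ_eq_sum_Icc_shift {lo hi d : ℤ} (hlo : lo ≤ d) (hhi : k + d ≤ hi) (n : ℤ) :
    convZ k l a b n =
      ∑ p ∈ Icc lo hi, extendByZero k a (p - d) * extendByZero l b (n + d - p) := by
  have hsub : Icc (0 : ℤ) k ⊆ Icc (lo - d) (hi - d) := Icc_subset_Icc (by omega) (by omega)
  rw [convZ, sum_subset hsub fun p _ hp => by
    rw [extendByZero_eq_zero (by rw [mem_Icc] at hp; omega), zero_mul]]
  refine sum_nbij' (· + d) (· - d) ?_ ?_ ?_ ?_ ?_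
  · simp only [mem_Icc]; omega
  · simp only [mem_Icc]; omega
  all_goals intros; simp

theorem convZ_natCast (n : ℕ) :
    convZ k l a b n = ∑ x ∈ antidiagonal n, extendByZero k a x.1 * extendByZero l b x.2 := by
  have hmin : Icc (0 : ℤ) (min k n) ⊆ Icc 0 n := Icc_subset_Icc le_rfl (min_le_right _ _)
  rw [convZ, ← sum_subset (Icc_subset_Icc le_rfl (min_le_left (k : ℤ) n)) fun p hp hp' => by
      rw [mem_Icc] at hp hp'
      rw [extendByZero_eq_zero (p := (n : ℤ) - p) (by omega), mul_zero],
    sum_subset hmin fun p hp hp' => by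
      rw [mem_Icc] at hp hp'
      rw [extendByZero_eq_zero (p := p) (by omega), zero_mul]]
  refine sum_nbij' (fun p => (p.toNat, (n - p).toNat)) (fun x => x.1) ?_ ?_ ?_ ?_ ?_
  · simp only [mem_Icc, HasAntidiagonal.mem_antidiagonal]; omega
  · simp only [mem_Icc, HasAntidiagonal.mem_antidiagonal]; omega
  · simp only [mem_Icc]; omega
  · simp only [HasAntidiagonal.mem_antidiagonal, Prod.ext_iff]; omega
  · simp only [mem_Icc]
    intro p hp
    rw [Int.toNat_of_nonneg hp.1, Int.toNat_of_nonneg (by omega)]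

theorem eq_convZ_of_sum_C_mul_X_pow_eq {c : ℕ → ℝ[X]}
    (hc : (∑ i ∈ range (k + l + 1), C (c i) * X ^ i) =
      (∑ i ∈ range (k + 1), C (a i) * X ^ i) * (∑ i ∈ range (l + 1), C (b i) * X ^ i))
    {n : ℕ} (hn : n ≤ k + l) : c n = convZ k l a b n := by
  have h := congrArg (coeff · n) hc
  simp only [coeff_mul, coeff_sum_range_C_mul_X_pow, extendByZero_natCast hn] at h
  rw [h, convZ_natCast]

theorem convZ_ne_zero_iff (ha : ∀ i, a i ∈ nonnegCoeffs) (hb : ∀ i, b i ∈ nonnegCoeffs)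
    (n : ℤ) : convZ k l a b n ≠ 0 ↔
      ∃ p, extendByZero k a p ≠ 0 ∧ extendByZero l b (n - p) ≠ 0 := by
  rw [convZ, Ne, sum_eq_zero_iff_of_mem_nonnegCoeffs fun p _ =>
    mul_mem (extendByZero_mem_nonnegCoeffs ha p) (extendByZero_mem_nonnegCoeffs hb _)]
  simp only [mul_eq_zero, not_forall, not_or]
  exact ⟨fun ⟨p, _, hp⟩ => ⟨p, hp⟩, fun ⟨p, hp⟩ => ⟨p, mem_Icc_of_extendByZero_ne_zero hp.1, hp⟩⟩

theorem convZ_ne_zero_of_le_of_le (hnna : ∀ i, a i ∈ nonnegCoeffs)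
    (hnnb : ∀ i, b i ∈ nonnegCoeffs) (ha : StronglyQLogConcave 0 k a)
    (hb : StronglyQLogConcave 0 l b) {i j w : ℤ} (hij : i ≤ j) (hjw : j ≤ w)
    (hi : convZ k l a b i ≠ 0) (hw : convZ k l a b w ≠ 0) : convZ k l a b j ≠ 0 := by
  rw [convZ_ne_zero_iff hnna hnnb] at hi hw ⊢
  obtain ⟨p₁, ha₁, hb₁⟩ := hi
  obtain ⟨p₂, ha₂, hb₂⟩ := hw
  have ha_min : extendByZero k a (min p₁ p₂) ≠ 0 := by
    rcases min_choice p₁ p₂ with h | h <;> rwa [h]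
  have ha_max : extendByZero k a (max p₁ p₂) ≠ 0 := by
    rcases max_choice p₁ p₂ with h | h <;> rwa [h]
  have hb_min : extendByZero l b (min (i - p₁) (w - p₂)) ≠ 0 := by
    rcases min_choice (i - p₁) (w - p₂) with h | h <;> rwa [h]
  have hb_max : extendByZero l b (max (i - p₁) (w - p₂)) ≠ 0 := by
    rcases max_choice (i - p₁) (w - p₂) with h | h <;> rwa [h]
  refine ⟨max (min p₁ p₂) (j - max (i - p₁) (w - p₂)), ?_, ?_⟩
  · exact ha.extendByZero_ne_zero (by omega) (by omega) ha_min ha_max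
  · exact hb.extendByZero_ne_zero (by omega) (by omega) hb_min hb_max

theorem convZ_mul_sub_mul_mem (hnna : ∀ i, a i ∈ nonnegCoeffs)
    (hnnb : ∀ i, b i ∈ nonnegCoeffs) (ha : StronglyQLogConcave 0 k a)
    (hb : StronglyQLogConcave 0 l b) {m n : ℤ} (hmn : m ≤ n) :
    convZ k l a b m * convZ k l a b n - convZ k l a b (m - 1) * convZ k l a b (n + 1) ∈
      nonnegCoeffs := by
  set T : ℤ × ℤ → ℝ[X] := fun p =>
    (extendByZero k a p.1 * extendByZero k a p.2 -
      extendByZero k a (p.1 - 1) * extendByZero k a (p.2 + 1)) *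
        (extendByZero l b (m - p.1) * extendByZero l b (n - p.2)) with hT
  have hD : convZ k l a b m * convZ k l a b n - convZ k l a b (m - 1) * convZ k l a b (n + 1) =
      ∑ p ∈ Icc (0 : ℤ) (k + 1) ×ˢ Icc ((0 : ℤ) - 1) (k + 1 - 1), T p := by
    rw [convZ_eq_sum_Icc_shift (lo := 0) (hi := k + 1) (d := 0) (by omega) (by omega),
      convZ_eq_sum_Icc_shift (lo := 0 - 1) (hi := k + 1 - 1) (d := 0) (by omega) (by omega),
      convZ_eq_sum_Icc_shift (lo := 0) (hi := k + 1) (d := 1) (by omega) (by omega),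
      convZ_eq_sum_Icc_shift (lo := 0 - 1) (hi := k + 1 - 1) (d := -1) (by omega) (by omega),
      sum_mul_sum, sum_mul_sum, ← sum_product', ← sum_product', ← sum_sub_distrib]
    refine sum_congr rfl fun p _ => ?_
    rw [hT]
    ring_nf
  have h2D : 2 * (convZ k l a b m * convZ k l a b n -
      convZ k l a b (m - 1) * convZ k l a b (n + 1)) =
      ∑ p ∈ Icc (0 : ℤ) (k + 1) ×ˢ Icc ((0 : ℤ) - 1) (k + 1 - 1), (T p + T (p.2 + 1, p.1 - 1)) := by
    rw [hD, two_mul, sum_add_distrib, sum_Icc_prod_Icc_comp_swap_shift]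
  refine mem_nonnegCoeffs_of_two_mul_mem (h2D ▸ sum_mem fun p _ => ?_)
  convert (ha.onInt_extendByZero hnna).mul_sub_mul_mul_mul_sub_mul_mem
    (hb.onInt_extendByZero hnnb) hmn p.1 p.2 using 1
  rw [hT]
  ring_nf

end convZ

/-- the convolution of two strongly q-log concave sequences of polynomials
with nonnegative real coefficients is strongly q-log concave. -/
theorem stmt0 (k l : ℕ) (a b c : ℕ → Polynomial ℝ)
    (ha_nonneg : ∀ i, ∀ m : ℕ, 0 ≤ (a i).coeff m)
    (hb_nonneg : ∀ i, ∀ m : ℕ, 0 ≤ (b i).coeff m)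
    (ha : StronglyQLogConcave 0 k a) (hb : StronglyQLogConcave 0 l b)
    (hc : (∑ i ∈ Finset.range (k + l + 1), Polynomial.C (c i) * Polynomial.X ^ i) =
        (∑ i ∈ Finset.range (k + 1), Polynomial.C (a i) * Polynomial.X ^ i) *
          (∑ i ∈ Finset.range (l + 1), Polynomial.C (b i) * Polynomial.X ^ i)) :
    StronglyQLogConcave 0 (k + l) c := by
  have hc_eq {n : ℕ} (hn : n ≤ k + l) := eq_convZ_of_sum_C_mul_X_pow_eq hc hn
  refine ⟨fun i j w _ hij hjw hw hi_ne hw_ne => ?_, fun i j hi hij hj => ?_⟩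
  · rw [hc_eq (by omega)] at hi_ne hw_ne ⊢
    exact convZ_ne_zero_of_le_of_le ha_nonneg hb_nonneg ha hb
      (Int.ofNat_le.2 hij.le) (Int.ofNat_le.2 hjw.le) hi_ne hw_ne
  · rw [hc_eq (show i ≤ k + l by omega), hc_eq (show j ≤ k + l by omega),
      hc_eq (show i - 1 ≤ k + l by omega), hc_eq (show j + 1 ≤ k + l by omega),
      Nat.cast_pred hi, Nat.cast_succ]
    exact convZ_mul_sub_mul_mem ha_nonneg hb_nonneg ha hb (Int.ofNat_le.2 hij)

end
end

section
/- Let S ⊂ Z_{>0} be a nonempty finite set of positive integers with m = max(S). Then for all integers n ≥ m + 1, D_S(n,q) = Σ_{k=0}^{m} a_k(S;q) · [n−m choose k]_q, where a_0(S;q) = 0 and for k ≥ 1, a_k(S;q) = Σ q^{ℓ(π)}, the sum being over all π ∈ A(S; m+k) such that [m+1, m+k] ⊆ {π_1, ..., π_m}. -/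
open Polynomial Finset

noncomputable section

/-!
Work with `0`-indexed positions and values, write `n = m + N`, and for `π` with `Des(π) = S` let
`K ⊆ [0, N)` be the set of values `≥ m`, shifted down by `m`, occurring among the first `m`
positions; `k = #K ≤ m`. All descents of `π` are `≤ m`, so `π` increases from position `m` on:
positions `m, …, m+k-1` carry the remaining values `< m`, and positions `≥ m+k` carry
`m + ([0, N) \ K)` in increasing order. The order-preserving relabelling `unshuffle` of the values
`m + K` onto `[m, m+k)` and of the other values `≥ m` onto `[m+k, m+N)` therefore turns `π` into
`σ` extended by the identity, where `σ ∈ 𝔖_{m+k}` has the same descent set and all its values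
`≥ m` among its first `m` positions. Conversely every such pair `(σ, K)` arises, and the
relabelling removes exactly the `gapCount K` inversions between values `m + b < m + a` with
`b ∉ K`, `a ∈ K`. Hence `D_S(m+N) = ∑ₖ aₖ ∑_{#K = k} q^{gapCount K}`, and the inner sum satisfies
the q-Pascal recursion, so it is `[N choose k]_q`.
-/

section QBinomial

lemma degree_qNum_lt (j : ℕ) : (qNum j).degree < j := by
  refine (degree_sum_le _ _).trans_lt ((Finset.sup_lt_iff (WithBot.bot_lt_coe j)).2 ?_)
  intro i hi
  rw [degree_X_pow]
  exact WithBot.coe_lt_coe.2 (mem_range.1 hi)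

lemma qNum_succ (j : ℕ) : qNum (j + 1) = X ^ j + qNum j := by
  rw [qNum, sum_range_succ, add_comm, qNum]

lemma qNum_monic (j : ℕ) : (qNum (j + 1)).Monic := by
  rw [qNum_succ]
  exact monic_X_pow_add (degree_qNum_lt j)

lemma natDegree_qNum_succ (j : ℕ) : (qNum (j + 1)).natDegree = j := by
  rw [qNum_succ, natDegree_add_eq_left_of_degree_lt (by simpa using degree_qNum_lt j),
    natDegree_X_pow]

lemma qNum_add (a b : ℕ) : qNum (a + b) = qNum a + X ^ a * qNum b := by
  simp only [qNum, sum_range_add, mul_sum, pow_add]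

lemma qFactorial_monic (n : ℕ) : (qFactorial n).Monic := by
  induction n with
  | zero => exact monic_one
  | succ n ih => exact ih.mul (qNum_monic n)

lemma natDegree_qFactorial_succ (n : ℕ) :
    (qFactorial (n + 1)).natDegree = (qFactorial n).natDegree + n := by
  rw [qFactorial, (qFactorial_monic n).natDegree_mul (qNum_monic n), natDegree_qNum_succ]

lemma natDegree_qFactorial_lt {N k : ℕ} (hN : 0 < N) (hNk : N < k) :
    (qFactorial N).natDegree < (qFactorial k).natDegree := by
  induction k, hNk using Nat.le_induction with
  | base => rw [natDegree_qFactorial_succ]; omega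
  | succ k _ ih => rw [natDegree_qFactorial_succ]; omega

def gapCount (K : Finset ℕ) : ℕ := ∑ a ∈ K, Nat.count (· ∉ K) a

def gaussianSum (N k : ℕ) : ℝ[X] := ∑ K ∈ powersetCard k (range N), X ^ gapCount K

lemma count_notMem_insert_of_le {K : Finset ℕ} {N a : ℕ} (ha : a ≤ N) :
    Nat.count (· ∉ insert N K) a = Nat.count (· ∉ K) a := by
  simp only [Nat.count_eq_card_filter_range]
  congr 1
  refine filter_congr fun x hx => ?_
  rw [mem_range] at hx
  simp only [mem_insert, not_or]
  exact and_iff_right (by omega)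

lemma count_notMem_eq {K : Finset ℕ} {N : ℕ} (hK : K ⊆ range N) :
    Nat.count (· ∉ K) N = N - #K := by
  rw [Nat.count_eq_card_filter_range, ← sdiff_eq_filter, card_sdiff_of_subset hK, card_range]

lemma gapCount_insert {K : Finset ℕ} {N : ℕ} (hK : K ⊆ range N) (hN : N ∉ K) :
    gapCount (insert N K) = gapCount K + (N - #K) := by
  rw [gapCount, sum_insert hN, count_notMem_insert_of_le le_rfl, count_notMem_eq hK, add_comm,
    gapCount]
  congr 1
  exact sum_congr rfl fun a ha => count_notMem_insert_of_le (mem_range.1 (hK ha)).le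

lemma gaussianSum_zero_right (N : ℕ) : gaussianSum N 0 = 1 := by
  simp [gaussianSum, gapCount]

lemma gaussianSum_self (N : ℕ) : gaussianSum N N = 1 := by
  have hcount : ∀ a ∈ range N, Nat.count (· ∉ range N) a = 0 := fun a ha => by
    rw [Nat.count_eq_card_filter_range, ← sdiff_eq_filter, sdiff_eq_empty_iff_subset.2
      (range_subset_range.2 (mem_range.1 ha).le), card_empty]
  have hself := powersetCard_self (range N)
  rw [card_range] at hself
  rw [gaussianSum, hself, sum_singleton, gapCount, sum_eq_zero hcount, pow_zero]

lemma gaussianSum_of_lt {N k : ℕ} (h : N < k) : gaussianSum N k = 0 := by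
  rw [gaussianSum, powersetCard_eq_empty.2 (by rwa [card_range]), sum_empty]

lemma gaussianSum_succ_succ (N k : ℕ) :
    gaussianSum (N + 1) (k + 1) = gaussianSum N (k + 1) + X ^ (N - k) * gaussianSum N k := by
  have hN : N ∉ range N := by simp
  simp only [gaussianSum]
  rw [range_add_one, powersetCard_succ_insert hN, sum_union, sum_image, mul_sum]
  · congr 1
    refine sum_congr rfl fun K hK => ?_
    rw [mem_powersetCard] at hK
    rw [gapCount_insert hK.1 fun h => hN (hK.1 h), hK.2, pow_add, mul_comm]
  · intro K hK L hL hKL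
    rw [mem_coe, mem_powersetCard] at hK hL
    rw [← erase_insert fun h => hN (hK.1 h), ← erase_insert fun h => hN (hL.1 h), hKL]
  · refine disjoint_left.2 fun K hK hK' => ?_
    obtain ⟨L, -, rfl⟩ := mem_image.1 hK'
    exact hN ((mem_powersetCard.1 hK).1 (mem_insert_self N L))

lemma gaussianSum_mul_qFactorial {N k : ℕ} (hk : k ≤ N) :
    gaussianSum N k * (qFactorial k * qFactorial (N - k)) = qFactorial N := by
  induction N generalizing k with
  | zero =>
    obtain rfl : k = 0 := by omega
    simp [gaussianSum_zero_right, qFactorial]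
  | succ N ih =>
    rcases k with _ | k
    · simp [gaussianSum_zero_right, qFactorial]
    obtain rfl | hk := (Nat.succ_le_succ_iff.1 hk).eq_or_lt
    · simp [gaussianSum_self, qFactorial]
    have ih_succ := ih (k := k + 1) hk
    have ih_self := ih (k := k) hk.le
    have hfac_k : qFactorial (k + 1) = qFactorial k * qNum (k + 1) := rfl
    have hfac_sub : qFactorial (N - k) = qFactorial (N - (k + 1)) * qNum (N - k) := by
      rw [show N - k = N - (k + 1) + 1 by omega]; rfl
    have hsplit : qNum (N + 1) = qNum (N - k) + X ^ (N - k) * qNum (k + 1) := by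
      rw [← qNum_add]; congr 1; omega
    rw [gaussianSum_succ_succ, Nat.add_sub_add_right, qFactorial.eq_2 N, hsplit]
    linear_combination (gaussianSum N (k + 1) * qFactorial (k + 1)) * hfac_sub +
      qNum (N - k) * ih_succ + (X ^ (N - k) * gaussianSum N k * qFactorial (N - k)) * hfac_k +
      (X ^ (N - k) * qNum (k + 1)) * ih_self

lemma qBinom_eq_gaussianSum {N k : ℕ} (hN : 0 < N) : qBinom N k = gaussianSum N k := by
  have hmonic := (qFactorial_monic k).mul (qFactorial_monic (N - k))
  rcases le_or_gt k N with hk | hk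
  · rw [qBinom, ← gaussianSum_mul_qFactorial hk, mul_comm, mul_divByMonic_cancel_left _ hmonic]
  · rw [gaussianSum_of_lt hk, qBinom, divByMonic_eq_zero_iff hmonic,
      Nat.sub_eq_zero_of_le hk.le, qFactorial, mul_one,
      degree_eq_natDegree (qFactorial_monic N).ne_zero,
      degree_eq_natDegree (qFactorial_monic k).ne_zero]
    exact_mod_cast natDegree_qFactorial_lt hN hk

end QBinomial

lemma StrictMonoOn.apply_eq_of_mapsTo {α : Type*} [LinearOrder α] [Finite α] {f : α → α}
    {s : Set α} (hf : StrictMonoOn f s) (hmaps : Set.MapsTo f s s) {x : α} (hx : x ∈ s) :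
    f x = x :=
  congrArg Subtype.val (StrictMono.apply_eq (f := fun y : s => ⟨f y, hmaps y.2⟩)
    (x := ⟨x, hx⟩) fun y z hyz => hf y.2 z.2 hyz)

section PermStatistics

variable {n : ℕ}

lemma invNum_inv (π : Equiv.Perm (Fin n)) : invNum π⁻¹ = invNum π := by
  unfold invNum
  refine card_equiv ((Equiv.prodComm _ _).trans (π⁻¹.prodCongr π⁻¹)) fun p => ?_
  simp [and_comm]

/-- By `h`, no pair of values inverted by `f` sits at positions inverted by `τ`, so the
inversions of `f * τ` are those of `τ` together with the `τ`-preimages of those of `f`. -/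
lemma invNum_mul (f τ : Equiv.Perm (Fin n))
    (h : ∀ a b, a < b → f b < f a → τ⁻¹ a < τ⁻¹ b) :
    invNum (f * τ) = invNum f + invNum τ := by
  unfold invNum
  rw [← card_filter_add_card_filter_not (p := fun p : Fin n × Fin n => τ p.2 < τ p.1), add_comm]
  congr 1
  · refine card_equiv (τ.prodCongr τ) fun ⟨i, j⟩ => ?_
    simp only [mem_filter, mem_univ, true_and, Equiv.prodCongr_apply, Prod.map, not_lt]
    constructor
    · rintro ⟨⟨hij, hf⟩, hτ⟩
      exact ⟨lt_of_le_of_ne hτ (τ.injective.ne hij.ne), hf⟩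
    · rintro ⟨hτ, hf⟩
      have := h _ _ hτ hf
      simp only [Equiv.Perm.coe_inv, Equiv.symm_apply_apply] at this
      exact ⟨⟨this, hf⟩, hτ.le⟩
  · rw [filter_filter]
    refine congrArg card (filter_congr fun ⟨i, j⟩ _ => ⟨fun h' => ⟨h'.1.1, h'.2⟩, ?_⟩)
    rintro ⟨hij, hτ⟩
    refine ⟨⟨hij, lt_of_not_ge fun hf => ?_⟩, hτ⟩
    have := h _ _ hτ (lt_of_le_of_ne hf (f.injective.ne (τ.injective.ne hij.ne)))
    simp only [Equiv.Perm.coe_inv, Equiv.symm_apply_apply] at this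
    exact this.not_gt hij

lemma desSet_mul (f τ : Equiv.Perm (Fin n))
    (h : ∀ i j : Fin n, (i : ℕ) + 1 = j → (f (τ j) < f (τ i) ↔ τ j < τ i)) :
    DesSet (f * τ) = DesSet τ := by
  unfold DesSet
  congr 1
  exact filter_congr fun i _ => exists_congr fun j => and_congr_right (h i j)

lemma exists_of_mem_desSet {π : Equiv.Perm (Fin n)} {s : ℕ} (hs : s ∈ DesSet π) :
    ∃ i j : Fin n, (i : ℕ) + 1 = j ∧ (j : ℕ) = s ∧ π j < π i := by
  obtain ⟨i, hi, rfl⟩ := mem_image.1 hs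
  obtain ⟨j, hij, hπ⟩ := (mem_filter.1 hi).2
  exact ⟨i, j, hij, hij.symm, hπ⟩

lemma mem_desSet_of_lt {π : Equiv.Perm (Fin n)} {i j : Fin n} (hij : (i : ℕ) + 1 = j)
    (hπ : π j < π i) : (j : ℕ) ∈ DesSet π :=
  mem_image.2 ⟨i, mem_filter.2 ⟨mem_univ _, j, hij, hπ⟩, hij⟩

lemma lt_of_mem_desSet {π : Equiv.Perm (Fin n)} {s : ℕ} (hs : s ∈ DesSet π) : s < n := by
  obtain ⟨-, j, -, rfl, -⟩ := exists_of_mem_desSet hs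
  exact j.2

lemma apply_lt_apply_of_desSet_le {π : Equiv.Perm (Fin n)} {m : ℕ}
    (h : ∀ s ∈ DesSet π, s ≤ m) {i j : Fin n} (hi : m ≤ i) (hij : i < j) : π i < π j := by
  have hsucc : ∀ a b : Fin n, m ≤ a → (a : ℕ) + 1 = b → π a < π b := fun a b ha hab =>
    lt_of_not_ge fun hba => by
      have := h _ (mem_desSet_of_lt hab (lt_of_le_of_ne hba (π.injective.ne (by omega))))
      omega
  obtain ⟨d, hd⟩ : ∃ d, (j : ℕ) = i + d + 1 := ⟨j - i - 1, by have : (i : ℕ) < j := hij; omega⟩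
  induction d generalizing j with
  | zero => exact hsucc i j hi (by omega)
  | succ d ih =>
    have hj' : (i : ℕ) + d + 1 < n := by omega
    exact (ih (j := ⟨_, hj'⟩) (by simp [Fin.lt_def]) rfl).trans
      (hsucc _ j (by dsimp only; omega) (by dsimp only; omega))

end PermStatistics

section ExtendPerm

variable {a b : ℕ} (h : a ≤ b)

def extendPerm (σ : Equiv.Perm (Fin a)) : Equiv.Perm (Fin b) :=
  σ.viaFintypeEmbedding (Fin.castLEEmb h)

variable {h}

lemma extendPerm_castLE (σ : Equiv.Perm (Fin a)) (i : Fin a) :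
    extendPerm h σ (Fin.castLE h i) = Fin.castLE h (σ i) :=
  Equiv.Perm.viaFintypeEmbedding_apply_image _ _ i

lemma extendPerm_of_le (σ : Equiv.Perm (Fin a)) {x : Fin b} (hx : a ≤ (x : ℕ)) :
    extendPerm h σ x = x :=
  Equiv.Perm.viaFintypeEmbedding_apply_notMem_range _ _ fun ⟨i, hi⟩ => by
    subst hi
    exact absurd i.2 (not_lt.2 hx)

lemma extendPerm_of_lt (σ : Equiv.Perm (Fin a)) {x : Fin b} (hx : (x : ℕ) < a) :
    extendPerm h σ x = Fin.castLE h (σ ⟨x, hx⟩) :=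
  extendPerm_castLE σ ⟨x, hx⟩

lemma val_extendPerm_of_lt (σ : Equiv.Perm (Fin a)) {x : Fin b} (hx : (x : ℕ) < a) :
    (extendPerm h σ x : ℕ) = σ ⟨x, hx⟩ := by
  rw [extendPerm_of_lt σ hx, Fin.val_castLE]

lemma val_extendPerm_lt_iff (σ : Equiv.Perm (Fin a)) (x : Fin b) :
    (extendPerm h σ x : ℕ) < a ↔ (x : ℕ) < a := by
  refine ⟨fun hσ => lt_of_not_ge fun hx => ?_, fun hx => ?_⟩
  · rw [extendPerm_of_le σ hx] at hσ
    omega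
  · rw [val_extendPerm_of_lt σ hx]
    exact Fin.is_lt _

lemma extendPerm_injective : Function.Injective (extendPerm h) := fun σ τ hστ =>
  Equiv.ext fun i => Fin.castLE_injective h (by rw [← extendPerm_castLE, hστ, extendPerm_castLE])

lemma lt_of_extendPerm_lt (σ : Equiv.Perm (Fin a)) {x y : Fin b} (hxy : x < y)
    (hσ : extendPerm h σ y < extendPerm h σ x) : (y : ℕ) < a := by
  have hxy' : (x : ℕ) < y := hxy
  refine lt_of_not_ge fun hy => ?_
  have hσ' : (extendPerm h σ y : ℕ) < extendPerm h σ x := hσ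
  rw [extendPerm_of_le σ hy] at hσ'
  rcases lt_or_ge (x : ℕ) a with hx | hx
  · have := (val_extendPerm_lt_iff (h := h) σ x).2 hx
    omega
  · rw [extendPerm_of_le σ hx] at hσ'
    omega

lemma invNum_extendPerm (σ : Equiv.Perm (Fin a)) : invNum (extendPerm h σ) = invNum σ := by
  symm
  refine card_bij (fun p _ => (Fin.castLE h p.1, Fin.castLE h p.2)) ?_ ?_ ?_
  · rintro ⟨i, j⟩ hp
    simp only [mem_filter, mem_univ, true_and] at hp ⊢
    rw [extendPerm_castLE, extendPerm_castLE]
    exact ⟨hp.1, hp.2⟩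
  · rintro ⟨i, j⟩ - ⟨i', j'⟩ - he
    simp only [Prod.mk.injEq] at he
    exact Prod.ext (Fin.castLE_injective h he.1) (Fin.castLE_injective h he.2)
  · rintro ⟨x, y⟩ hp
    simp only [mem_filter, mem_univ, true_and] at hp
    have hy := lt_of_extendPerm_lt σ hp.1 hp.2
    have hx : (x : ℕ) < a := lt_trans hp.1 hy
    refine ⟨(⟨x, hx⟩, ⟨y, hy⟩), ?_, rfl⟩
    simp only [mem_filter, mem_univ, true_and]
    rwa [extendPerm_of_lt σ hx, extendPerm_of_lt σ hy, Fin.castLE_lt_castLE_iff] at hp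

lemma desSet_extendPerm (σ : Equiv.Perm (Fin a)) : DesSet (extendPerm h σ) = DesSet σ := by
  ext s
  constructor
  · intro hs
    obtain ⟨i, j, hij, rfl, hσ⟩ := exists_of_mem_desSet hs
    have hj := lt_of_extendPerm_lt σ (Fin.lt_def.2 (by omega)) hσ
    rw [extendPerm_of_lt (x := i) σ (by omega), extendPerm_of_lt σ hj,
      Fin.castLE_lt_castLE_iff] at hσ
    exact mem_desSet_of_lt (i := ⟨i, by omega⟩) (j := ⟨j, hj⟩) hij hσ
  · intro hs
    obtain ⟨i, j, hij, rfl, hσ⟩ := exists_of_mem_desSet hs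
    refine mem_desSet_of_lt (i := Fin.castLE h i) (j := Fin.castLE h j) hij ?_
    rwa [extendPerm_castLE, extendPerm_castLE, Fin.castLE_lt_castLE_iff]

lemma exists_extendPerm_eq (ρ : Equiv.Perm (Fin b)) (hρ : ∀ x : Fin b, a ≤ (x : ℕ) → ρ x = x) :
    ∃ σ : Equiv.Perm (Fin a), extendPerm h σ = ρ := by
  have hlt : ∀ i : Fin a, (ρ (Fin.castLE h i) : ℕ) < a := fun i => lt_of_not_ge fun hi => by
    rw [ρ.injective (hρ _ hi)] at hi
    exact absurd i.2 (not_lt.2 hi)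
  let f : Fin a → Fin a := fun i => ⟨ρ (Fin.castLE h i), hlt i⟩
  have hf : Function.Injective f := fun i j hij =>
    Fin.castLE_injective h (ρ.injective (Fin.ext (by simpa [f] using hij)))
  refine ⟨Equiv.ofBijective f (Finite.injective_iff_bijective.1 hf), Equiv.ext fun x => ?_⟩
  rcases lt_or_ge (x : ℕ) a with hx | hx
  · exact Fin.ext (val_extendPerm_of_lt _ hx)
  · rw [extendPerm_of_le _ hx, hρ x hx]

end ExtendPerm

section Unshuffle

variable (m : ℕ) (K : Finset ℕ)

def unshuffleFun (w : ℕ) : ℕ :=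
  if w < m then w
  else if w - m ∈ K then m + Nat.count (· ∈ K) (w - m)
  else m + #K + Nat.count (· ∉ K) (w - m)

variable {m K} {N : ℕ}

lemma count_mem_lt_card {a : ℕ} (ha : a ∈ K) : Nat.count (· ∈ K) a < #K := by
  rw [Nat.count_eq_card_filter_range]
  refine card_lt_card ⟨fun x hx => (mem_filter.1 hx).2, fun hsub => ?_⟩
  simpa using mem_filter.1 (hsub ha)

lemma unshuffleFun_lt (hK : K ⊆ range N) {w : ℕ} (hw : w < m + N) :
    unshuffleFun m K w < m + N := by
  unfold unshuffleFun
  split_ifs with h₁ h₂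
  · omega
  · have := count_mem_lt_card h₂
    have := card_le_card hK
    simp only [card_range] at this
    omega
  · have h₃ := Nat.count_strict_mono (p := (· ∉ K)) h₂ (show w - m < N by omega)
    rw [count_notMem_eq hK] at h₃
    omega

lemma unshuffleFun_of_lt {w : ℕ} (hw : w < m) : unshuffleFun m K w = w := if_pos hw

lemma le_unshuffleFun {w : ℕ} (hw : m ≤ w) : m ≤ unshuffleFun m K w := by
  unfold unshuffleFun
  split_ifs <;> omega

lemma unshuffleFun_lt_iff {w : ℕ} (hw : m ≤ w) : unshuffleFun m K w < m + #K ↔ w - m ∈ K := by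
  unfold unshuffleFun
  split_ifs with h₁ h₂
  · omega
  · simpa [h₂] using count_mem_lt_card h₂
  · simp only [h₂, iff_false]; omega

lemma unshuffleFun_lt_unshuffleFun {w w' : ℕ} (hww' : w < w')
    (h : ¬(m ≤ w ∧ w - m ∉ K ∧ w' - m ∈ K)) : unshuffleFun m K w < unshuffleFun m K w' := by
  rcases lt_or_ge w m with hw | hw
  · rw [unshuffleFun_of_lt hw]
    rcases lt_or_ge w' m with hw' | hw'
    · rwa [unshuffleFun_of_lt hw']
    · exact hw.trans_le (le_unshuffleFun hw')
  have hsub : w - m < w' - m := by omega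
  unfold unshuffleFun
  rw [if_neg (show ¬w < m by omega), if_neg (show ¬w' < m by omega)]
  by_cases hK : w - m ∈ K <;> by_cases hK' : w' - m ∈ K
  · have := Nat.count_strict_mono (p := (· ∈ K)) hK hsub
    simp only [if_pos hK, if_pos hK']
    omega
  · have := count_mem_lt_card hK
    simp only [if_pos hK, if_neg hK']
    omega
  · exact absurd ⟨hw, hK, hK'⟩ h
  · have := Nat.count_strict_mono (p := (· ∉ K)) hK hsub
    simp only [if_neg hK, if_neg hK']
    omega

lemma unshuffleFun_lt_unshuffleFun_of_notMem_of_mem {w w' : ℕ} (hw : m ≤ w) (hw' : m ≤ w')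
    (hK : w - m ∉ K) (hK' : w' - m ∈ K) : unshuffleFun m K w' < unshuffleFun m K w :=
  ((unshuffleFun_lt_iff hw').2 hK').trans_le (not_lt.1 ((unshuffleFun_lt_iff hw).not.2 hK))

lemma unshuffleFun_lt_unshuffleFun_iff {w w' : ℕ} (hww' : w < w') :
    unshuffleFun m K w' < unshuffleFun m K w ↔ m ≤ w ∧ w - m ∉ K ∧ w' - m ∈ K :=
  ⟨fun h => by_contra fun h' => (unshuffleFun_lt_unshuffleFun hww' h').not_gt h,
    fun h => unshuffleFun_lt_unshuffleFun_of_notMem_of_mem h.1 (by omega) h.2.1 h.2.2⟩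

lemma unshuffleFun_injective : Function.Injective (unshuffleFun m K) :=
  Function.Injective.of_lt_imp_ne fun w w' hww' => by
    by_cases h : m ≤ w ∧ w - m ∉ K ∧ w' - m ∈ K
    · exact ((unshuffleFun_lt_unshuffleFun_iff hww').2 h).ne'
    · exact (unshuffleFun_lt_unshuffleFun hww' h).ne

variable (m) in
def unshuffle (hK : K ⊆ range N) : Equiv.Perm (Fin (m + N)) :=
  Equiv.ofBijective (fun w => ⟨unshuffleFun m K w, unshuffleFun_lt hK w.2⟩)
    (Finite.injective_iff_bijective.1 fun _ _ h =>
      Fin.ext (unshuffleFun_injective (congrArg Fin.val h)))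

lemma val_unshuffle (hK : K ⊆ range N) (w : Fin (m + N)) :
    (unshuffle m hK w : ℕ) = unshuffleFun m K w := rfl

lemma unshuffle_lt_unshuffle_iff (hK : K ⊆ range N) {w w' : Fin (m + N)} (hww' : w < w') :
    unshuffle m hK w' < unshuffle m hK w ↔ m ≤ (w : ℕ) ∧ (w : ℕ) - m ∉ K ∧ (w' : ℕ) - m ∈ K :=
  unshuffleFun_lt_unshuffleFun_iff hww'

lemma invNum_unshuffle (hK : K ⊆ range N) : invNum (unshuffle m hK) = gapCount K := by
  unfold invNum gapCount
  rw [card_eq_sum_card_fiberwise (f := fun p : Fin (m + N) × Fin (m + N) => (p.2 : ℕ) - m)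
    (t := K) fun p hp => ((unshuffle_lt_unshuffle_iff hK (mem_filter.1 hp).2.1).1
      (mem_filter.1 hp).2.2).2.2]
  refine sum_congr rfl fun a ha => ?_
  have haN := mem_range.1 (hK ha)
  rw [Nat.count_eq_card_filter_range]
  refine card_bij (fun p _ => (p.1 : ℕ) - m) ?_ ?_ ?_
  · rintro ⟨w, w'⟩ hp
    simp only [mem_filter, mem_univ, true_and] at hp
    obtain ⟨⟨hww', hinv⟩, rfl⟩ := hp
    obtain ⟨hw, hwK, -⟩ := (unshuffle_lt_unshuffle_iff hK hww').1 hinv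
    have : (w : ℕ) < w' := hww'
    simp only [mem_filter, mem_range]
    exact ⟨by omega, hwK⟩
  · rintro ⟨w, w'⟩ hp ⟨v, v'⟩ hp' he
    simp only [mem_filter, mem_univ, true_and] at hp hp'
    have hw := ((unshuffle_lt_unshuffle_iff hK hp.1.1).1 hp.1.2).1
    have hv := ((unshuffle_lt_unshuffle_iff hK hp'.1.1).1 hp'.1.2).1
    have : (w' : ℕ) < m + N := w'.2
    have : (v' : ℕ) < m + N := v'.2
    have : (w : ℕ) < w' := hp.1.1
    have : (v : ℕ) < v' := hp'.1.1
    have he' : (w : ℕ) - m = v - m := he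
    have hw'a : (w' : ℕ) - m = a := hp.2
    have hv'a : (v' : ℕ) - m = a := hp'.2
    exact Prod.ext (Fin.ext (show (w : ℕ) = v by omega)) (Fin.ext (show (w' : ℕ) = v' by omega))
  · intro b hb
    simp only [mem_filter, mem_range] at hb
    refine ⟨(⟨m + b, by omega⟩, ⟨m + a, by omega⟩), ?_, by simp⟩
    simp only [mem_filter, mem_univ, true_and]
    have hlt : (⟨m + b, by omega⟩ : Fin (m + N)) < ⟨m + a, by omega⟩ := by
      simp only [Fin.mk_lt_mk]; omega
    refine ⟨⟨hlt, (unshuffle_lt_unshuffle_iff hK hlt).2 ?_⟩, by simp⟩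
    simpa using ⟨hb.2, ha⟩

end Unshuffle

section HighPrefixValues

variable {n : ℕ}

def highPrefixValues (m : ℕ) (π : Equiv.Perm (Fin n)) : Finset ℕ :=
  (univ.filter fun i : Fin n => (i : ℕ) < m ∧ m ≤ (π i : ℕ)).image fun i => (π i : ℕ) - m

lemma mem_highPrefixValues {m a : ℕ} {π : Equiv.Perm (Fin n)} :
    a ∈ highPrefixValues m π ↔ ∃ i : Fin n, (i : ℕ) < m ∧ (π i : ℕ) = m + a := by
  simp only [highPrefixValues, mem_image, mem_filter, mem_univ, true_and]
  constructor
  · rintro ⟨i, ⟨hi, hπ⟩, rfl⟩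
    exact ⟨i, hi, by omega⟩
  · rintro ⟨i, hi, hπ⟩
    exact ⟨i, ⟨hi, by omega⟩, by omega⟩

lemma card_highPrefixValues (m : ℕ) (π : Equiv.Perm (Fin n)) :
    #(highPrefixValues m π) = #{i : Fin n | (i : ℕ) < m ∧ m ≤ (π i : ℕ)} := by
  refine card_image_of_injOn fun i hi j hj hij => π.injective (Fin.ext ?_)
  replace hi := (mem_filter.1 (mem_coe.1 hi)).2.2
  replace hj := (mem_filter.1 (mem_coe.1 hj)).2.2
  have : (π i : ℕ) - m = (π j : ℕ) - m := hij
  omega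

lemma highPrefixValues_subset_range {m N : ℕ} (π : Equiv.Perm (Fin (m + N))) :
    highPrefixValues m π ⊆ range N := fun a ha => by
  obtain ⟨i, -, hπ⟩ := mem_highPrefixValues.1 ha
  have := (π i).2
  exact mem_range.2 (by omega)

lemma card_highPrefixValues_le (m : ℕ) (π : Equiv.Perm (Fin n)) :
    #(highPrefixValues m π) ≤ m := by
  rw [card_highPrefixValues]
  refine (card_le_card fun i hi => ?_).trans ((Fin.card_filter_val_lt (m := m)).trans_le
    (min_le_right n m))
  simp only [mem_filter, mem_univ, true_and] at hi ⊢
  exact hi.1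

lemma sub_notMem_highPrefixValues {m : ℕ} {π : Equiv.Perm (Fin n)} {p : Fin n}
    (hp : m ≤ (p : ℕ)) (hπp : m ≤ (π p : ℕ)) : (π p : ℕ) - m ∉ highPrefixValues m π := by
  intro hmem
  obtain ⟨i, hi, he⟩ := mem_highPrefixValues.1 hmem
  rw [π.injective (Fin.ext (show (π i : ℕ) = π p by omega))] at hi
  omega

/-- The values `< m` fill the first `m - #K` prefix positions and, the suffix being increasing,
the first `#K` suffix positions; everything later carries a value `≥ m`. -/
lemma le_apply_of_card_highPrefixValues_le {m N : ℕ} {π : Equiv.Perm (Fin (m + N))}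
    (hπ : ∀ s ∈ DesSet π, s ≤ m) {p : Fin (m + N)} (hp : m + #(highPrefixValues m π) ≤ p) :
    m ≤ (π p : ℕ) := by
  by_contra hlt
  have hsmall : #{i : Fin (m + N) | (π i : ℕ) < m} = m := by
    rw [card_equiv π (t := {v : Fin (m + N) | (v : ℕ) < m}) (by simp), Fin.card_filter_val_lt]
    omega
  have hprefix := card_filter_add_card_filter_not (s := {i : Fin (m + N) | (i : ℕ) < m})
    (p := fun i => (π i : ℕ) < m)
  rw [filter_filter, filter_filter, Fin.card_filter_val_lt, min_eq_right (by omega)] at hprefix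
  simp only [not_lt] at hprefix
  rw [← card_highPrefixValues] at hprefix
  have hsuffix : #(Icc (⟨m, by omega⟩ : Fin (m + N)) p) = p + 1 - m := Fin.card_Icc _ _
  have hsub : (univ.filter fun i : Fin (m + N) => (i : ℕ) < m ∧ (π i : ℕ) < m) ∪
      Icc ⟨m, by omega⟩ p ⊆ univ.filter fun i : Fin (m + N) => (π i : ℕ) < m := by
    intro i hi
    simp only [mem_union, mem_filter, mem_univ, true_and, mem_Icc, Fin.le_def] at hi ⊢
    rcases hi with hi | ⟨hmi, hip⟩
    · exact hi.2
    · rcases hip.lt_or_eq with hip | hip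
      · have := apply_lt_apply_of_desSet_le hπ hmi (Fin.lt_def.2 hip)
        rw [Fin.lt_def] at this
        omega
      · rw [Fin.ext hip]
        omega
  have hdisj : Disjoint (univ.filter fun i : Fin (m + N) => (i : ℕ) < m ∧ (π i : ℕ) < m)
      (Icc ⟨m, by omega⟩ p) := disjoint_left.2 fun i hi hi' => by
    simp only [mem_filter, mem_univ, true_and, mem_Icc, Fin.le_def] at hi hi'
    omega
  have := card_le_card hsub
  rw [card_union_of_disjoint hdisj] at this
  omega

end HighPrefixValues

/-- `a_k(S; q)`, with the condition `[m+1, m+k] ⊆ {π_1, …, π_m}` read in `0`-indexed form: every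
value `≥ m` sits at a position `< m`. -/
def Apoly (S : Finset ℕ) (m k : ℕ) : ℝ[X] :=
  ∑ σ ∈ univ.filter (fun σ : Equiv.Perm (Fin (m + k)) =>
    DesSet σ = S ∧ ∀ x : Fin (m + k), m ≤ (σ x : ℕ) → (x : ℕ) < m), X ^ invNum σ

section Decomposition

variable {m N : ℕ} {K : Finset ℕ} (hK : K ⊆ range N)

lemma lt_of_unshuffle_inv_lt {u v : Fin (m + N)} (huv : u < v)
    (h : (unshuffle m hK)⁻¹ v < (unshuffle m hK)⁻¹ u) :
    m ≤ (u : ℕ) ∧ (u : ℕ) < m + #K ∧ m + #K ≤ (v : ℕ) := by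
  set g := unshuffle m hK
  have hu : (u : ℕ) = unshuffleFun m K (g⁻¹ u) := by
    rw [← val_unshuffle hK]; simp [g]
  have hv : (v : ℕ) = unshuffleFun m K (g⁻¹ v) := by
    rw [← val_unshuffle hK]; simp [g]
  have hinv : g (g⁻¹ u) < g (g⁻¹ v) := by simpa using huv
  obtain ⟨hw, hwK, hw'K⟩ := (unshuffle_lt_unshuffle_iff hK h).1 hinv
  have h' : ((g⁻¹ v : Fin (m + N)) : ℕ) < g⁻¹ u := h
  rw [hu, hv]
  exact ⟨le_unshuffleFun (by omega), (unshuffleFun_lt_iff (by omega)).2 hw'K,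
    not_lt.1 ((unshuffleFun_lt_iff hw).not.2 hwK)⟩

variable {h : m + #K ≤ m + N} {σ : Equiv.Perm (Fin (m + #K))}
  (hσ : ∀ x : Fin (m + #K), m ≤ (σ x : ℕ) → (x : ℕ) < m)

include hσ in
lemma lt_of_le_extendPerm {x : Fin (m + N)} (hle : m ≤ (extendPerm h σ x : ℕ))
    (hlt : (extendPerm h σ x : ℕ) < m + #K) : (x : ℕ) < m := by
  have hx := (val_extendPerm_lt_iff σ x).1 hlt
  rw [val_extendPerm_of_lt σ hx] at hle
  exact hσ _ hle

include hσ in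
lemma add_one_lt_of_extendPerm {x y : Fin (m + N)} (hx : m ≤ (extendPerm h σ x : ℕ))
    (hx' : (extendPerm h σ x : ℕ) < m + #K) (hy : m + #K ≤ (extendPerm h σ y : ℕ)) :
    (x : ℕ) + 1 < y := by
  have := lt_of_le_extendPerm hσ hx hx'
  have := (val_extendPerm_lt_iff (h := h) σ y).not.1 (by omega)
  omega

include hσ in
lemma invNum_unshuffle_inv_mul :
    invNum ((unshuffle m hK)⁻¹ * extendPerm h σ) = gapCount K + invNum σ := by
  rw [invNum_mul, invNum_inv, invNum_unshuffle, invNum_extendPerm]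
  intro a b hab hg
  obtain ⟨ha, ha', hb⟩ := lt_of_unshuffle_inv_lt hK hab hg
  have hτb : (extendPerm h σ)⁻¹ b = b :=
    Equiv.Perm.inv_eq_iff_eq.2 (extendPerm_of_le σ (by omega)).symm
  have hτa : extendPerm h σ ((extendPerm h σ)⁻¹ a) = a := (extendPerm h σ).apply_symm_apply a
  have := lt_of_le_extendPerm hσ (x := (extendPerm h σ)⁻¹ a) (by rwa [hτa]) (by rwa [hτa])
  rw [hτb, Fin.lt_def]
  omega

include hσ in
lemma desSet_unshuffle_inv_mul :
    DesSet ((unshuffle m hK)⁻¹ * extendPerm h σ) = DesSet σ := by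
  rw [desSet_mul, desSet_extendPerm]
  intro i j hij
  set τ := extendPerm h σ
  have hne : τ i ≠ τ j := τ.injective.ne (Fin.ne_of_val_ne (by omega))
  constructor
  · intro hg
    refine lt_of_not_ge fun hτ => ?_
    obtain ⟨h₁, h₂, h₃⟩ := lt_of_unshuffle_inv_lt hK (lt_of_le_of_ne hτ hne) hg
    have := add_one_lt_of_extendPerm hσ h₁ h₂ h₃
    omega
  · intro hτ
    refine lt_of_not_ge fun hg => ?_
    obtain ⟨h₁, h₂, h₃⟩ := lt_of_unshuffle_inv_lt hK hτ
      (lt_of_le_of_ne hg ((unshuffle m hK)⁻¹.injective.ne hne))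
    have := add_one_lt_of_extendPerm hσ h₁ h₂ h₃
    omega

include hσ in
lemma highPrefixValues_unshuffle_inv_mul :
    highPrefixValues m ((unshuffle m hK)⁻¹ * extendPerm h σ) = K := by
  set g := unshuffle m hK
  set τ := extendPerm h σ
  ext a
  rw [mem_highPrefixValues]
  constructor
  · rintro ⟨i, hi, hπ⟩
    have hτ : (τ i : ℕ) = unshuffleFun m K (m + a) := by
      rw [← hπ, ← val_unshuffle hK]
      exact congrArg Fin.val (g.apply_symm_apply (τ i)).symm
    have hlt : (τ i : ℕ) < m + #K := (val_extendPerm_lt_iff σ i).2 (by omega)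
    rw [hτ, unshuffleFun_lt_iff (by omega)] at hlt
    simpa using hlt
  · intro ha
    have haN := mem_range.1 (hK ha)
    set w : Fin (m + N) := ⟨m + a, by omega⟩
    have hgw : m ≤ (g w : ℕ) ∧ (g w : ℕ) < m + #K := by
      rw [val_unshuffle]
      exact ⟨le_unshuffleFun (by simp [w]), (unshuffleFun_lt_iff (by simp [w])).2 (by simpa [w])⟩
    have hτ : τ (τ⁻¹ (g w)) = g w := τ.apply_symm_apply (g w)
    refine ⟨τ⁻¹ (g w), lt_of_le_extendPerm hσ (by rw [hτ]; exact hgw.1) (by rw [hτ]; exact hgw.2),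
      ?_⟩
    simp [w]

lemma unshuffle_mul_apply_of_le {π : Equiv.Perm (Fin (m + N))} (hπ : ∀ s ∈ DesSet π, s ≤ m)
    (hπK : highPrefixValues m π = K) {p : Fin (m + N)} (hp : m + #K ≤ (p : ℕ)) :
    (unshuffle m hK * π) p = p := by
  subst hπK
  have hlarge := fun p => le_apply_of_card_highPrefixValues_le (π := π) hπ (p := p)
  refine StrictMonoOn.apply_eq_of_mapsTo (s := {p : Fin (m + N) | m + #(highPrefixValues m π) ≤ p})
    (fun x hx y hy hxy => ?_) (fun x hx => ?_) hp
  · replace hx : m + #(highPrefixValues m π) ≤ (x : ℕ) := hx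
    replace hy : m + #(highPrefixValues m π) ≤ (y : ℕ) := hy
    exact unshuffleFun_lt_unshuffleFun (apply_lt_apply_of_desSet_le hπ (by omega) hxy)
      fun h => sub_notMem_highPrefixValues (by omega) (hlarge y hy) h.2.2
  · replace hx : m + #(highPrefixValues m π) ≤ (x : ℕ) := hx
    exact not_lt.1 ((unshuffleFun_lt_iff (hlarge x hx)).not.2
      (sub_notMem_highPrefixValues (by omega) (hlarge x hx)))

lemma exists_eq_unshuffle_inv_mul {π : Equiv.Perm (Fin (m + N))} (hπ : ∀ s ∈ DesSet π, s ≤ m)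
    (hπK : highPrefixValues m π = K) :
    ∃ σ : Equiv.Perm (Fin (m + #K)), (∀ x : Fin (m + #K), m ≤ (σ x : ℕ) → (x : ℕ) < m) ∧
      (unshuffle m hK)⁻¹ * extendPerm h σ = π := by
  obtain ⟨σ, hσ⟩ := exists_extendPerm_eq (h := h) (unshuffle m hK * π)
    fun p => unshuffle_mul_apply_of_le hK hπ hπK
  refine ⟨σ, fun x hx => lt_of_not_ge fun hxm => ?_, by rw [hσ, inv_mul_cancel_left]⟩
  have hgπ : (unshuffle m hK (π (Fin.castLE h x)) : ℕ) = σ x := by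
    rw [← Equiv.Perm.mul_apply, ← hσ, extendPerm_castLE, Fin.val_castLE]
  rw [val_unshuffle] at hgπ
  rcases lt_or_ge (π (Fin.castLE h x) : ℕ) m with hπx | hπx
  · rw [unshuffleFun_of_lt hπx] at hgπ
    omega
  · subst hπK
    have := (unshuffleFun_lt_iff hπx).not.2 (sub_notMem_highPrefixValues hxm hπx)
    have := x.2
    omega

include hK in
lemma sum_filter_highPrefixValues_eq {S : Finset ℕ} (hSm : ∀ s ∈ S, s ≤ m) :
    ∑ π ∈ univ.filter (fun π : Equiv.Perm (Fin (m + N)) =>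
        DesSet π = S ∧ highPrefixValues m π = K), (X : ℝ[X]) ^ invNum π =
      Apoly S m #K * X ^ gapCount K := by
  have h : m + #K ≤ m + N := by
    have := card_le_card hK
    rw [card_range] at this
    omega
  rw [Apoly, sum_mul]
  refine (sum_bij (fun σ _ => (unshuffle m hK)⁻¹ * extendPerm h σ) ?_ ?_ ?_ ?_).symm
  · intro σ hσ
    simp only [mem_filter, mem_univ, true_and] at hσ ⊢
    exact ⟨(desSet_unshuffle_inv_mul hK hσ.2).trans hσ.1,
      highPrefixValues_unshuffle_inv_mul hK hσ.2⟩
  · exact fun σ _ σ' _ he => extendPerm_injective (mul_left_cancel he)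
  · intro π hπ
    simp only [mem_filter, mem_univ, true_and] at hπ
    obtain ⟨σ, hσ, rfl⟩ :=
      exists_eq_unshuffle_inv_mul hK (h := h) (fun s hs => hSm s (hπ.1 ▸ hs)) hπ.2
    refine ⟨σ, mem_filter.2 ⟨mem_univ _, ?_, hσ⟩, rfl⟩
    rw [← desSet_unshuffle_inv_mul hK hσ]
    exact hπ.1
  · intro σ hσ
    rw [invNum_unshuffle_inv_mul hK (mem_filter.1 hσ).2.2, pow_add, mul_comm]

end Decomposition

lemma Apoly_zero {S : Finset ℕ} {m : ℕ} (hmS : m ∈ S) : Apoly S m 0 = 0 :=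
  sum_eq_zero fun _ hσ => absurd (lt_of_mem_desSet ((mem_filter.1 hσ).2.1 ▸ hmS)) (lt_irrefl m)

lemma Apoly_eq_sum_filter_Icc (S : Finset ℕ) (m k : ℕ) :
    Apoly S m k = ∑ σ ∈ univ.filter (fun σ : Equiv.Perm (Fin (m + k)) =>
      DesSet σ = S ∧ ∀ v ∈ Icc (m + 1) (m + k),
        ∃ i : Fin (m + k), (i : ℕ) < m ∧ (σ i : ℕ) + 1 = v),
      X ^ invNum σ := by
  refine sum_congr (filter_congr fun σ _ => and_congr_right fun _ => ?_) fun _ _ => rfl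
  constructor
  · intro hσ v hv
    rw [mem_Icc] at hv
    refine ⟨σ⁻¹ ⟨v - 1, by omega⟩, hσ _ ?_, ?_⟩ <;> simp <;> omega
  · intro hσ x hx
    obtain ⟨i, hi, hiv⟩ := hσ (σ x + 1) (mem_Icc.2 ⟨by omega, by omega⟩)
    rwa [← σ.injective (Fin.ext (by omega : (σ i : ℕ) = σ x))]

lemma Dpoly_add_eq_sum {S : Finset ℕ} {m : ℕ} (hSm : ∀ s ∈ S, s ≤ m) (N : ℕ) :
    Dpoly S (m + N) = ∑ k ∈ range (m + 1), Apoly S m k * gaussianSum N k := by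
  rw [Dpoly, ← sum_fiberwise_of_maps_to (g := highPrefixValues m)
    (t := (range (m + 1)).biUnion fun k => powersetCard k (range N)) fun π _ =>
      mem_biUnion.2 ⟨_, mem_range.2 (Nat.lt_succ_of_le (card_highPrefixValues_le m π)),
        mem_powersetCard.2 ⟨highPrefixValues_subset_range π, rfl⟩⟩,
    sum_biUnion fun i _ j _ hij => pairwise_disjoint_powersetCard _ hij]
  refine sum_congr rfl fun k _ => ?_
  rw [gaussianSum, mul_sum]
  refine sum_congr rfl fun K hK => ?_
  obtain ⟨hKN, rfl⟩ := mem_powersetCard.1 hK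
  rw [filter_filter]
  exact sum_filter_highPrefixValues_eq hKN hSm

theorem stmt2_general (S : Finset ℕ) (hS : S.Nonempty)
    (m : ℕ) (hm : m = S.max' hS)
    (a : ℕ → Polynomial ℝ) (ha0 : a 0 = 0)
    (ha : ∀ j, 1 ≤ j → j ≤ m →
      a j = ∑ π ∈ Finset.univ.filter (fun π : Equiv.Perm (Fin (m + j)) =>
          DesSet π = S ∧ ∀ v ∈ Finset.Icc (m + 1) (m + j),
            ∃ i : Fin (m + j), (i : ℕ) < m ∧ (π i : ℕ) + 1 = v),
        X ^ invNum π)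
    (n : ℕ) (hn : m + 1 ≤ n) :
    Dpoly S n = ∑ k ∈ Finset.range (m + 1), a k * qBinom (n - m) k := by
  have hSm : ∀ s ∈ S, s ≤ m := fun s hs => hm ▸ S.le_max' s hs
  obtain ⟨N, rfl⟩ : ∃ N, n = m + N := ⟨n - m, by omega⟩
  rw [Dpoly_add_eq_sum hSm, Nat.add_sub_cancel_left]
  refine sum_congr rfl fun k hk => ?_
  rw [qBinom_eq_gaussianSum (by omega)]
  rcases Nat.eq_zero_or_pos k with rfl | hk0
  · rw [ha0, Apoly_zero (hm ▸ S.max'_mem hS)]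
  · rw [ha k hk0 (Nat.lt_succ_iff.1 (mem_range.1 hk)), Apoly_eq_sum_filter_Icc]

/-- the q-descent polynomial in the basis of q-binomial coefficients
`[n-m choose k]_q`:  `D_S(n,q) = Σ_{k=0}^m a_k(S;q) [n-m choose k]_q`. -/
theorem stmt2 (S : Finset ℕ) (hS : S.Nonempty) (hpos : ∀ s ∈ S, 0 < s)
    (m : ℕ) (hm : m = S.max' hS)
    (a : ℕ → Polynomial ℝ) (ha0 : a 0 = 0)
    (ha : ∀ j, 1 ≤ j → j ≤ m →
      a j = ∑ π ∈ Finset.univ.filter (fun π : Equiv.Perm (Fin (m + j)) =>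
          DesSet π = S ∧ ∀ v ∈ Finset.Icc (m + 1) (m + j),
            ∃ i : Fin (m + j), (i : ℕ) < m ∧ (π i : ℕ) + 1 = v),
        X ^ invNum π)
    (n : ℕ) (hn : m + 1 ≤ n) :
    Dpoly S n = ∑ k ∈ Finset.range (m + 1), a k * qBinom (n - m) k :=
  stmt2_general S hS m hm a ha0 ha n hn

end
end

section
/- Let S ⊂ Z_{>0} be a nonempty finite set of positive integers with m = max(S). For 1 ≤ k ≤ m let b_k(S;q) = Σ q^{ℓ(π)}, the sum being over all π ∈ A(S; m+1) with π(m+1) = k, and set b_0(S;q) = 0. Then the sequence (b_k(S;q))_{k=0,...,m} is strongly q-log concave. -/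
open Polynomial Finset

noncomputable section

/-!
Deleting the last entry of a permutation of `[M+2]` and standardizing the rest gives the
recursion
  `b_t(T) = q^(M+2-t) · ∑_{s ≥ t} b_s(T')` if `M+1 ∈ T`, and
  `b_t(T) = q^(M+2-t) · ∑_{s < t} b_s(T')` otherwise,
where `T' = T \ {M+1}` and the `b_s(T')` live on permutations of `[M+1]`. Tails and heads of a
strongly q-log-concave sequence with nonnegative coefficients are again strongly q-log-concave,
and since `q^(M+2-t) · q^t` does not depend on `t` the power of `q` does not disturb the
inequalities; so induction on `M` applies. Nonnegativity together with the inequalities then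
rules out internal zeros.
-/

def CoeffLE (p q : ℝ[X]) : Prop := ∀ n, p.coeff n ≤ q.coeff n

infix:50 " ≤ᶜ " => CoeffLE

namespace CoeffLE

variable {p q r s : ℝ[X]}

lemma refl (p : ℝ[X]) : p ≤ᶜ p := fun _ => le_rfl

lemma trans (h₁ : p ≤ᶜ q) (h₂ : q ≤ᶜ r) : p ≤ᶜ r := fun n => (h₁ n).trans (h₂ n)

instance : Trans CoeffLE CoeffLE CoeffLE := ⟨trans⟩

lemma add (h₁ : p ≤ᶜ q) (h₂ : r ≤ᶜ s) : p + r ≤ᶜ q + s := fun n => by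
  simpa only [coeff_add] using add_le_add (h₁ n) (h₂ n)

lemma zero_le_sub_iff : 0 ≤ᶜ q - p ↔ p ≤ᶜ q := by
  simp only [CoeffLE, coeff_zero, coeff_sub, sub_nonneg]

lemma antisymm (h₁ : p ≤ᶜ q) (h₂ : q ≤ᶜ p) : p = q :=
  Polynomial.ext fun n => le_antisymm (h₁ n) (h₂ n)

lemma zero_X_pow (k : ℕ) : (0 : ℝ[X]) ≤ᶜ X ^ k := fun n => by
  rw [coeff_zero, coeff_X_pow]
  positivity

lemma mul_nonneg (hp : 0 ≤ᶜ p) (hq : 0 ≤ᶜ q) : 0 ≤ᶜ p * q := fun n => by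
  rw [coeff_zero, coeff_mul]
  exact Finset.sum_nonneg fun x _ =>
    _root_.mul_nonneg (by simpa using hp x.1) (by simpa using hq x.2)

lemma mul_left (hr : 0 ≤ᶜ r) (h : p ≤ᶜ q) : r * p ≤ᶜ r * q := by
  rw [← zero_le_sub_iff, ← mul_sub]
  exact mul_nonneg hr (zero_le_sub_iff.mpr h)

lemma X_pow_mul_iff (k : ℕ) : X ^ k * p ≤ᶜ X ^ k * q ↔ p ≤ᶜ q := by
  refine ⟨fun h n => ?_, mul_left (zero_X_pow k)⟩
  simpa only [coeff_X_pow_mul] using h (n + k)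

lemma sum_le_sum {ι : Type*} {s : Finset ι} {f g : ι → ℝ[X]} (h : ∀ i ∈ s, f i ≤ᶜ g i) :
    ∑ i ∈ s, f i ≤ᶜ ∑ i ∈ s, g i := fun n => by
  simpa only [finsetSum_coeff] using Finset.sum_le_sum fun i hi => h i hi n

lemma sum_le_sum_of_subset {ι : Type*} {s t : Finset ι} {f : ι → ℝ[X]} (hst : s ⊆ t)
    (hf : ∀ i, 0 ≤ᶜ f i) : ∑ i ∈ s, f i ≤ᶜ ∑ i ∈ t, f i := fun n => by
  simpa only [finsetSum_coeff] using
    Finset.sum_le_sum_of_subset_of_nonneg hst fun i _ _ => by simpa using hf i n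

lemma sum_nonneg {ι : Type*} {s : Finset ι} {f : ι → ℝ[X]} (hf : ∀ i, 0 ≤ᶜ f i) :
    0 ≤ᶜ ∑ i ∈ s, f i := by
  simpa using sum_le_sum_of_subset (Finset.empty_subset s) hf

end CoeffLE

-- The paper's `a_{i-1} a_{j+1} ≤ a_i a_j` for `i ≤ j`, shifted by one and imposed on all of `ℕ`.
def QLogConcave (a : ℕ → ℝ[X]) : Prop :=
  ∀ ⦃i j : ℕ⦄, i < j → a i * a (j + 1) ≤ᶜ a (i + 1) * a j

namespace QLogConcave

variable {a : ℕ → ℝ[X]}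

lemma mul_le_mul_shift (h : QLogConcave a) {s : ℕ} :
    ∀ {k t : ℕ}, s + k ≤ t → a s * a (t + k) ≤ᶜ a (s + k) * a t
  | 0, _, _ => CoeffLE.refl _
  | k + 1, t, hk =>
    calc a s * a (t + (k + 1)) = a s * a (t + 1 + k) := by rw [add_right_comm, add_assoc]
      _ ≤ᶜ a (s + k) * a (t + 1) := mul_le_mul_shift h (by omega)
      _ ≤ᶜ a (s + (k + 1)) * a t := by rw [← add_assoc]; exact h (by omega)

lemma mul_le_mul (h : QLogConcave a) {x y s t : ℕ} (hxs : x ≤ s) (hxt : x ≤ t)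
    (hsum : x + y = s + t) : a x * a y ≤ᶜ a s * a t := by
  rcases le_total s t with hst | hts
  · have := h.mul_le_mul_shift (s := x) (k := s - x) (t := t) (by omega)
    rwa [show t + (s - x) = y by omega, show x + (s - x) = s by omega] at this
  · have := h.mul_le_mul_shift (s := x) (k := t - x) (t := s) (by omega)
    rwa [show s + (t - x) = y by omega, show x + (t - x) = t by omega, mul_comm (a t)] at this

lemma X_pow_mul (h : QLogConcave a) (N : ℕ) : QLogConcave fun t => X ^ N * a t := by
  intro i j hij
  dsimp only
  rw [mul_mul_mul_comm (X ^ N) (a i), mul_mul_mul_comm (X ^ N) (a (i + 1)), ← pow_add,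
    CoeffLE.X_pow_mul_iff]
  exact h hij

lemma of_X_pow_mul (h : QLogConcave fun t => X ^ t * a t) : QLogConcave a := by
  intro i j hij
  have := h hij
  simp only at this
  rwa [mul_mul_mul_comm (X ^ i) (a i), mul_mul_mul_comm (X ^ (i + 1)) (a (i + 1)), ← pow_add,
    ← pow_add, show i + (j + 1) = i + 1 + j by omega, CoeffLE.X_pow_mul_iff] at this

variable (hnn : ∀ t, 0 ≤ᶜ a t)
include hnn

lemma sum_range (h : QLogConcave a) : QLogConcave fun t => ∑ s ∈ range t, a s := by
  intro i j hij
  set d := j - i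
  have key : (∑ s ∈ range i, a s) * a j ≤ᶜ a i * ∑ s ∈ range j, a s :=
    calc (∑ s ∈ range i, a s) * a j = ∑ s ∈ range i, a s * a j := Finset.sum_mul _ _ _
      _ ≤ᶜ ∑ s ∈ range i, a i * a (s + d) := CoeffLE.sum_le_sum fun s hs =>
          h.mul_le_mul (mem_range.mp hs).le (by omega) (by omega)
      _ = ∑ s ∈ Ico d j, a i * a s := by
          rw [range_eq_Ico, Finset.sum_Ico_add' (fun s => a i * a s), zero_add,
            show i + d = j by omega]
      _ ≤ᶜ ∑ s ∈ range j, a i * a s := CoeffLE.sum_le_sum_of_subset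
          (by rw [range_eq_Ico]; exact Ico_subset_Ico_left (Nat.zero_le d))
          fun s => CoeffLE.mul_nonneg (hnn i) (hnn s)
      _ = a i * ∑ s ∈ range j, a s := (Finset.mul_sum _ _ _).symm
  simp only [sum_range_succ, mul_add, add_mul]
  exact (CoeffLE.refl _).add key

lemma sum_Ico (h : QLogConcave a) (N : ℕ) : QLogConcave fun t => ∑ s ∈ Ico t N, a s := by
  intro i j hij
  dsimp only
  have hsum_nonneg : ∀ k, 0 ≤ᶜ ∑ s ∈ Ico k N, a s := fun k => CoeffLE.sum_nonneg hnn
  rcases lt_or_ge j N with hjN | hNj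
  swap
  · rw [Ico_eq_empty_of_le (by omega : N ≤ j + 1), sum_empty, mul_zero]
    exact CoeffLE.mul_nonneg (hsum_nonneg _) (hsum_nonneg _)
  set d := j - i
  have key : a i * ∑ s ∈ Ico (j + 1) N, a s ≤ᶜ (∑ s ∈ Ico (i + 1) N, a s) * a j :=
    calc a i * ∑ s ∈ Ico (j + 1) N, a s = ∑ s ∈ Ico (i + 1) (N - d), a i * a (s + d) := by
          rw [Finset.mul_sum, Finset.sum_Ico_add' (fun s => a i * a s),
            show i + 1 + d = j + 1 by omega, show N - d + d = N by omega]
      _ ≤ᶜ ∑ s ∈ Ico (i + 1) (N - d), a s * a j := CoeffLE.sum_le_sum fun s hs =>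
          h.mul_le_mul (Nat.le_of_succ_le (mem_Ico.mp hs).1) hij.le (by omega)
      _ ≤ᶜ ∑ s ∈ Ico (i + 1) N, a s * a j := CoeffLE.sum_le_sum_of_subset
          (Ico_subset_Ico_right (Nat.sub_le N d)) fun s => CoeffLE.mul_nonneg (hnn s) (hnn j)
      _ = (∑ s ∈ Ico (i + 1) N, a s) * a j := (Finset.sum_mul _ _ _).symm
  simp only [sum_eq_sum_Ico_succ_bot (hij.trans hjN), sum_eq_sum_Ico_succ_bot hjN, mul_add,
    add_mul]
  exact key.add (CoeffLE.refl _)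

lemma indicator (h : QLogConcave a) (L R : ℕ) :
    QLogConcave fun t => if t ∈ Icc L R then a t else 0 := by
  intro i j hij
  by_cases hin : i ∈ Icc L R ∧ j + 1 ∈ Icc L R
  · simp only [mem_Icc] at hin
    simp only [mem_Icc, hin, and_self, if_true, show L ≤ i + 1 ∧ i + 1 ≤ R by omega,
      show L ≤ j ∧ j ≤ R by omega]
    exact h hij
  · have hnn' : ∀ t, 0 ≤ᶜ if t ∈ Icc L R then a t else 0 := fun t => by
      split_ifs
      exacts [hnn t, CoeffLE.refl 0]
    rw [not_and_or] at hin
    rcases hin with hi | hj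
    · simp only [hi, if_false, zero_mul]
      exact CoeffLE.mul_nonneg (hnn' _) (hnn' _)
    · simp only [hj, if_false, mul_zero]
      exact CoeffLE.mul_nonneg (hnn' _) (hnn' _)

lemma ne_zero (h : QLogConcave a) {i j l : ℕ} (hij : i ≤ j) (hjl : j < l) (hi : a i ≠ 0)
    (hl : a l ≠ 0) : a j ≠ 0 := by
  induction j, hij using Nat.le_induction with
  | base => exact hi
  | succ j hij ih =>
    intro hj
    have hle : a j * a l ≤ᶜ 0 := by
      simpa [hj, Nat.sub_add_cancel (by omega : 1 ≤ l)] using h (by omega : j < l - 1)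
    exact mul_ne_zero (ih (by omega)) hl (hle.antisymm (CoeffLE.mul_nonneg (hnn j) (hnn l)))

lemma of_eq_zero_of_ne {n : ℕ} (hzero : ∀ t, t ≠ n → a t = 0) : QLogConcave a := by
  intro i j hij
  have : a i * a (j + 1) = 0 := by
    rcases eq_or_ne i n with rfl | hi
    · rw [hzero (j + 1) (by omega), mul_zero]
    · rw [hzero i hi, zero_mul]
  rw [this]
  exact CoeffLE.mul_nonneg (hnn _) (hnn _)

end QLogConcave

/-- In one-line notation, `snocPerm σ t` is `σ` with every value `≥ t` raised by one, followed
by `t`. -/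
def snocPerm {M : ℕ} (σ : Equiv.Perm (Fin (M + 1))) (t : Fin (M + 2)) :
    Equiv.Perm (Fin (M + 2)) :=
  (finSuccEquiv' (Fin.last (M + 1))).trans ((Equiv.optionCongr σ).trans (finSuccEquiv' t).symm)

@[simp]
lemma snocPerm_last {M : ℕ} (σ : Equiv.Perm (Fin (M + 1))) (t : Fin (M + 2)) :
    snocPerm σ t (Fin.last (M + 1)) = t := by
  simp [snocPerm, finSuccEquiv'_at]

@[simp]
lemma snocPerm_castSucc {M : ℕ} (σ : Equiv.Perm (Fin (M + 1))) (t : Fin (M + 2))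
    (q : Fin (M + 1)) :
    snocPerm σ t q.castSucc = t.succAbove (σ q) := by
  simp [snocPerm, finSuccEquiv'_last_apply_castSucc, finSuccEquiv'_symm_some]

lemma invNum_eq_sum {n : ℕ} (π : Equiv.Perm (Fin n)) :
    invNum π = ∑ a, ∑ b, if a < b ∧ π b < π a then 1 else 0 := by
  rw [invNum, card_filter, ← Finset.univ_product_univ, Finset.sum_product]

lemma card_filter_le_castSucc {M : ℕ} (t : Fin (M + 2)) :
    #{v : Fin (M + 1) | t ≤ v.castSucc} = M + 1 - t := by
  have hlt := Fin.card_filter_val_lt (n := M + 1) (m := t)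
  have hsplit := card_filter_add_card_filter_not (s := univ) fun v : Fin (M + 1) => v < (t : ℕ)
  simp only [not_lt, card_univ, Fintype.card_fin] at hsplit
  simp only [Fin.le_def, Fin.val_castSucc]
  omega

lemma invNum_snocPerm {M : ℕ} (σ : Equiv.Perm (Fin (M + 1))) (t : Fin (M + 2)) :
    invNum (snocPerm σ t) = invNum σ + (M + 1 - t) := by
  simp only [invNum_eq_sum, Fin.sum_univ_castSucc (n := M + 1), snocPerm_castSucc, snocPerm_last,
    Fin.castSucc_lt_castSucc_iff, Fin.succAbove_lt_succAbove_iff, Fin.castSucc_lt_last,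
    Fin.lt_succAbove_iff_le_castSucc, lt_irrefl, false_and, if_false, true_and, sum_add_distrib,
    (Fin.le_last _).not_gt, sum_const_zero, add_zero]
  rw [Equiv.sum_comp σ (fun v => if t ≤ v.castSucc then 1 else 0), sum_boole, Nat.cast_id,
    card_filter_le_castSucc]

lemma mem_desSet_iff {n : ℕ} (π : Equiv.Perm (Fin (n + 1))) (k : ℕ) :
    k ∈ DesSet π ↔ ∃ a : Fin n, (a : ℕ) + 1 = k ∧ π a.succ < π a.castSucc := by
  simp only [DesSet, mem_image, mem_filter, mem_univ, true_and]
  constructor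
  · rintro ⟨a, ⟨b, hab, hlt⟩, rfl⟩
    refine ⟨⟨a, by omega⟩, rfl, ?_⟩
    convert hlt using 2 <;> ext <;> simp [hab]
  · rintro ⟨a, rfl, hlt⟩
    exact ⟨a.castSucc, ⟨a.succ, by simp, hlt⟩, by simp⟩

lemma self_notMem_desSet {n : ℕ} (π : Equiv.Perm (Fin (n + 1))) : n + 1 ∉ DesSet π := by
  rintro h
  obtain ⟨a, ha, -⟩ := (mem_desSet_iff π _).mp h
  omega

lemma desSet_snocPerm {M : ℕ} (σ : Equiv.Perm (Fin (M + 1))) (t : Fin (M + 2)) :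
    DesSet (snocPerm σ t) =
      if t ≤ (σ (Fin.last M)).castSucc then insert (M + 1) (DesSet σ) else DesSet σ := by
  ext k
  rw [mem_desSet_iff, Fin.exists_fin_succ']
  simp only [Fin.succ_castSucc, snocPerm_castSucc, Fin.succ_last, snocPerm_last,
    Fin.succAbove_lt_succAbove_iff, Fin.lt_succAbove_iff_le_castSucc, Fin.val_castSucc,
    Fin.val_last, ← mem_desSet_iff]
  split_ifs with h <;> simp [h, eq_comm, or_comm]

lemma desSet_snocPerm_eq_iff {M : ℕ} (σ : Equiv.Perm (Fin (M + 1))) (t : Fin (M + 2))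
    (T : Finset ℕ) : DesSet (snocPerm σ t) = T ↔
      DesSet σ = T.erase (M + 1) ∧ (M + 1 ∈ T ↔ t ≤ (σ (Fin.last M)).castSucc) := by
  have hσ := self_notMem_desSet σ
  rw [desSet_snocPerm]
  split_ifs with h
  · simp only [h, iff_true]
    constructor
    · rintro rfl
      exact ⟨(erase_insert hσ).symm, mem_insert_self _ _⟩
    · rintro ⟨hD, hT⟩
      rw [hD, insert_erase hT]
  · simp only [h, iff_false]
    constructor
    · rintro rfl
      exact ⟨(erase_eq_of_notMem hσ).symm, hσ⟩
    · rintro ⟨hD, hT⟩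
      rw [hD, erase_eq_of_notMem hT]

/-- The standardization of `τ` with its last entry deleted. -/
def initPerm {M : ℕ} (τ : Equiv.Perm (Fin (M + 2))) : Equiv.Perm (Fin (M + 1)) :=
  Equiv.removeNone ((finSuccEquiv' (Fin.last (M + 1))).symm.trans
    (τ.trans (finSuccEquiv' (τ (Fin.last (M + 1))))))

lemma Equiv.optionCongr_removeNone {α β : Type*} (e : Option α ≃ Option β)
    (h : e none = none) :
    Equiv.optionCongr (Equiv.removeNone e) = e := by
  refine Equiv.ext fun x => ?_
  cases x with
  | none => simp [h]
  | some a =>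
    obtain ⟨b, hb⟩ := (Option.ne_none_iff_exists' (o := e (some a))).mp fun h' => by
      simpa using e.injective (h'.trans h.symm)
    exact Equiv.removeNone_some e ⟨b, hb⟩

lemma initPerm_snocPerm {M : ℕ} (σ : Equiv.Perm (Fin (M + 1))) (t : Fin (M + 2)) :
    initPerm (snocPerm σ t) = σ := by
  have : (finSuccEquiv' (Fin.last (M + 1))).symm.trans ((snocPerm σ t).trans (finSuccEquiv' t))
      = Equiv.optionCongr σ := by
    ext x
    simp [snocPerm]
  rw [initPerm, snocPerm_last, this, Equiv.removeNone_optionCongr]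

lemma snocPerm_initPerm {M : ℕ} (τ : Equiv.Perm (Fin (M + 2))) :
    snocPerm (initPerm τ) (τ (Fin.last (M + 1))) = τ := by
  rw [snocPerm, initPerm, Equiv.optionCongr_removeNone _ (by simp [finSuccEquiv'_at])]
  ext p
  simp

/-- `Bpoly T M t` is the paper's `b_t(T;q)` on permutations of `[M+1]`; the last value is read
1-indexed, so `Bpoly T M 0 = 0`. -/
def Bpoly (T : Finset ℕ) (M t : ℕ) : ℝ[X] :=
  ∑ π ∈ Finset.univ.filter (fun π : Equiv.Perm (Fin (M + 1)) =>
      DesSet π = T ∧ (π (Fin.last M) : ℕ) + 1 = t), X ^ invNum π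

lemma Bpoly_nonneg (T : Finset ℕ) (M t : ℕ) : 0 ≤ᶜ Bpoly T M t :=
  CoeffLE.sum_nonneg fun _ => CoeffLE.zero_X_pow _

lemma Bpoly_eq_zero {T : Finset ℕ} {M t : ℕ} (ht : t ∉ Icc 1 (M + 1)) : Bpoly T M t = 0 := by
  rw [Bpoly, filter_false_of_mem, sum_empty]
  rintro π - ⟨-, rfl⟩
  exact ht (mem_Icc.mpr ⟨by omega, by omega⟩)

lemma Bpoly_succ (T : Finset ℕ) (M : ℕ) {t : ℕ} (ht : t ∈ Icc 1 (M + 2)) :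
    Bpoly T (M + 1) t = X ^ (M + 2 - t) *
      ∑ s ∈ (if M + 1 ∈ T then Ico t (M + 2) else range t), Bpoly (T.erase (M + 1)) M s := by
  rw [mem_Icc] at ht
  obtain ⟨t₀, rfl⟩ : ∃ t₀ : Fin (M + 2), (t₀ : ℕ) + 1 = t := ⟨⟨t - 1, by omega⟩, by simp; omega⟩
  set F := if M + 1 ∈ T then Ico (t₀ + 1 : ℕ) (M + 2) else range (t₀ + 1)
  have hF : ∀ σ : Equiv.Perm (Fin (M + 1)),
      (σ (Fin.last M) : ℕ) + 1 ∈ F ↔ (M + 1 ∈ T ↔ t₀ ≤ (σ (Fin.last M)).castSucc) := by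
    intro σ
    have := (σ (Fin.last M)).isLt
    rw [Fin.le_def, Fin.val_castSucc]
    simp only [F]
    split_ifs with hT <;> simp only [hT, mem_Ico, mem_range, true_iff, false_iff, not_le] <;> omega
  have hrhs : ∑ s ∈ F, Bpoly (T.erase (M + 1)) M s = ∑ σ ∈ univ.filter (fun σ =>
      DesSet σ = T.erase (M + 1) ∧ (σ (Fin.last M) : ℕ) + 1 ∈ F), X ^ invNum σ := by
    rw [← filter_filter, ← sum_fiberwise_eq_sum_filter]
    simp only [Bpoly, filter_filter]
  have hdes : ∀ σ, DesSet (snocPerm σ t₀) = T ↔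
      DesSet σ = T.erase (M + 1) ∧ (σ (Fin.last M) : ℕ) + 1 ∈ F := fun σ => by
    rw [desSet_snocPerm_eq_iff, hF]
  have hsnoc : ∀ τ : Equiv.Perm (Fin (M + 2)), (τ (Fin.last (M + 1)) : ℕ) + 1 = t₀ + 1 →
      snocPerm (initPerm τ) t₀ = τ := fun τ hτ => by
    rw [← Fin.ext (Nat.add_right_cancel hτ)]
    exact snocPerm_initPerm τ
  rw [hrhs, mul_sum, Bpoly]
  refine sum_nbij' initPerm (fun σ => snocPerm σ t₀) ?_ ?_ ?_ ?_ ?_ <;>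
    simp only [mem_filter, mem_univ, true_and]
  · rintro τ ⟨hτ, hlast⟩
    rw [← hdes, hsnoc τ hlast, hτ]
  · rintro σ hσ
    exact ⟨(hdes σ).mpr hσ, by rw [snocPerm_last]⟩
  · rintro τ ⟨-, hlast⟩
    exact hsnoc τ hlast
  · exact fun σ _ => initPerm_snocPerm σ t₀
  · rintro τ ⟨-, hlast⟩
    conv_lhs => rw [← hsnoc τ hlast, invNum_snocPerm]
    rw [← pow_add]
    congr 1
    omega

theorem qLogConcave_Bpoly (T : Finset ℕ) (M : ℕ) : QLogConcave (Bpoly T M) := by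
  induction M generalizing T with
  | zero =>
    exact QLogConcave.of_eq_zero_of_ne (Bpoly_nonneg T 0) (n := 1) fun t ht =>
      Bpoly_eq_zero (by simp only [mem_Icc]; omega)
  | succ M ih =>
    set c := Bpoly (T.erase (M + 1)) M
    have hpartial : QLogConcave fun t =>
        ∑ s ∈ (if M + 1 ∈ T then Ico t (M + 2) else range t), c s := by
      by_cases hT : M + 1 ∈ T <;> simp only [hT, if_true, if_false]
      · exact (ih _).sum_Ico (Bpoly_nonneg _ M) (M + 2)
      · exact (ih _).sum_range (Bpoly_nonneg _ M)
    -- `X ^ t` absorbs the factor `X ^ (M + 2 - t)` of `Bpoly_succ`, valid for `1 ≤ t ≤ M + 2`.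
    have hshift : (fun t => X ^ t * Bpoly T (M + 1) t) = fun t => X ^ (M + 2) *
        if t ∈ Icc 1 (M + 2) then ∑ s ∈ (if M + 1 ∈ T then Ico t (M + 2) else range t), c s
        else 0 := by
      funext t
      by_cases ht : t ∈ Icc 1 (M + 2)
      · rw [if_pos ht, Bpoly_succ T M ht, ← mul_assoc, ← pow_add,
          Nat.add_sub_cancel' (mem_Icc.mp ht).2]
      · rw [if_neg ht, Bpoly_eq_zero ht, mul_zero, mul_zero]
    refine QLogConcave.of_X_pow_mul ?_
    rw [hshift]
    exact (hpartial.indicator (fun t => CoeffLE.sum_nonneg (Bpoly_nonneg _ M)) 1 (M + 2)).X_pow_mul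
      (M + 2)

theorem stmt4_general (S : Finset ℕ) (m : ℕ)
    (b : ℕ → Polynomial ℝ) (hb0 : b 0 = 0)
    (hb : ∀ j, 1 ≤ j → j ≤ m →
      b j = ∑ π ∈ Finset.univ.filter (fun π : Equiv.Perm (Fin (m + 1)) =>
          DesSet π = S ∧ (π (Fin.last m) : ℕ) + 1 = j),
        X ^ invNum π) :
    StronglyQLogConcave 0 m b := by
  have hbB : ∀ t ≤ m, b t = Bpoly S m t := fun t ht => by
    rcases Nat.eq_zero_or_pos t with rfl | h
    · rw [hb0, Bpoly_eq_zero (by simp)]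
    · exact hb t h ht
  have hB := qLogConcave_Bpoly S m
  refine ⟨fun i j l _ hij hjl hlm hi hl => ?_, fun i j hi hij hjm => ?_⟩
  · rw [hbB i (by omega)] at hi
    rw [hbB l hlm] at hl
    rw [hbB j (by omega)]
    exact hB.ne_zero (Bpoly_nonneg S m) hij.le hjl hi hl
  · intro n
    obtain ⟨i, rfl⟩ : ∃ i', i = i' + 1 := ⟨i - 1, by omega⟩
    rw [hbB (i + 1) (by omega), hbB j hjm.le, Nat.add_sub_cancel, hbB i (by omega),
      hbB (j + 1) hjm]
    simpa using CoeffLE.zero_le_sub_iff.mpr (hB (by omega : i < j)) n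

/-- the sequence `(b_k(S;q))_{k=0,…,m}` is strongly q-log concave. -/
theorem stmt4 (S : Finset ℕ) (hS : S.Nonempty) (hpos : ∀ s ∈ S, 0 < s)
    (m : ℕ) (hm : m = S.max' hS)
    (b : ℕ → Polynomial ℝ) (hb0 : b 0 = 0)
    (hb : ∀ j, 1 ≤ j → j ≤ m →
      b j = ∑ π ∈ Finset.univ.filter (fun π : Equiv.Perm (Fin (m + 1)) =>
          DesSet π = S ∧ (π (Fin.last m) : ℕ) + 1 = j),
        X ^ invNum π) :
    StronglyQLogConcave 0 m b :=
  stmt4_general S m b hb0 hb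

end
end

section
/- Let S ⊂ Z_{>0} be a nonempty finite set of positive integers with m = max(S). For 1 ≤ k ≤ m let a_k(S;q) = Σ q^{ℓ(π)} over all π ∈ A(S; m+k) with [m+1, m+k] ⊆ {π_1, ..., π_m}, and let b_i(S;q) = Σ q^{ℓ(π)} over all π ∈ A(S; m+1) with π(m+1) = i. Then for all 1 ≤ k ≤ m, a_k(S;q) = q^{k(k−1)} · Σ_{i=1}^{m−k+1} [m−i choose k−1]_q · b_i(S;q). -/
open Polynomial Finset

noncomputable section

/-!
Since `m = max S`, the entries of `π ∈ A(S; m + k)` after position `m` increase, so the condition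
`[m+1, m+k] ⊆ {π_1, …, π_m}` only says that the last entry is at most `m`. Let `c_N(V)` be the
`q`-count of the `π ∈ A(S; N)` with last entry at most `V`. For `N ∉ S`, deleting the last entry
`V + 1` of `π ∈ A(S; N+1)` and standardising is a bijection onto the `σ ∈ A(S; N)` with last entry
at most `V` that lowers the length by `N - V`, so `c_{N+1}(V+1) = c_{N+1}(V) + q^(N-V) c_N(V)`
for `N ≥ m`. With the `q`-Pascal rule, induction on `r` and `V` gives
`c_{m+1+r}(V) = q^(r(r+1) + r(m-V)) Σ_{i ≤ V} [V-i choose r]_q b_i`, and `a_{r+1} = c_{m+1+r}(m)`.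
-/

lemma mem_DesSet_iff {n : ℕ} (π : Equiv.Perm (Fin (n + 1))) (j : ℕ) :
    j ∈ DesSet π ↔ ∃ a : Fin n, π a.succ < π a.castSucc ∧ (a : ℕ) + 1 = j := by
  simp only [DesSet, mem_image, mem_filter, mem_univ, true_and]
  constructor
  · rintro ⟨a, ⟨b, hab, hlt⟩, rfl⟩
    refine ⟨⟨a, by omega⟩, ?_, rfl⟩
    rwa [show (⟨a, _⟩ : Fin n).succ = b from Fin.ext (by simp [← hab])]
  · rintro ⟨a, hlt, rfl⟩
    exact ⟨a.castSucc, ⟨a.succ, by simp, hlt⟩, rfl⟩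

lemma apply_le_apply_last {n m : ℕ} (π : Equiv.Perm (Fin (n + 1)))
    (hDes : ∀ j ∈ DesSet π, j ≤ m) (p : Fin (n + 1)) (hp : m ≤ p) : π p ≤ π (Fin.last n) := by
  induction p using Fin.reverseInduction with
  | last => exact le_rfl
  | cast i ih =>
    have hasc : π i.castSucc < π i.succ := by
      refine lt_of_le_of_ne (not_lt.1 fun hlt => ?_)
        (π.injective.ne (Fin.castSucc_lt_succ (i := i)).ne)
      have := hDes _ ((mem_DesSet_iff π _).2 ⟨i, hlt, rfl⟩)
      simp only [Fin.val_castSucc] at hp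
      omega
    exact hasc.le.trans (ih (by simp only [Fin.val_succ, Fin.val_castSucc] at hp ⊢; omega))

lemma forall_top_mem_prefix_iff {n m : ℕ} (π : Equiv.Perm (Fin (n + 1)))
    (hDes : ∀ j ∈ DesSet π, j ≤ m) :
    (∀ v ∈ Icc (m + 1) (n + 1), ∃ i : Fin (n + 1), (i : ℕ) < m ∧ (π i : ℕ) + 1 = v) ↔
      (π (Fin.last n) : ℕ) < m := by
  constructor
  · intro htop
    by_contra! hlast
    obtain ⟨i, him, hi⟩ := htop (π (Fin.last n) + 1) (mem_Icc.2 ⟨by omega, by omega⟩)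
    obtain rfl : i = Fin.last n := π.injective (Fin.ext (by omega))
    have := (π (Fin.last n)).is_le
    rw [Fin.val_last] at him
    omega
  · intro hlast v hv
    rw [mem_Icc] at hv
    have hval : (π (π.symm ⟨v - 1, by omega⟩) : ℕ) = v - 1 := by rw [Equiv.apply_symm_apply]
    refine ⟨π.symm ⟨v - 1, by omega⟩, ?_, by omega⟩
    by_contra! hm
    have := Fin.le_def.1 (apply_le_apply_last π hDes _ hm)
    omega

namespace Equiv.Perm

variable {n : ℕ}

/-- In one-line notation, append the value `d` and shift up the old values `≥ d`. -/
def insertLast (σ : Perm (Fin (n + 1))) (d : Fin (n + 2)) : Perm (Fin (n + 2)) :=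
  finSuccEquivLast.trans (σ.optionCongr.trans (finSuccEquiv' d).symm)

def eraseLast (π : Perm (Fin (n + 2))) : Perm (Fin (n + 1)) :=
  Equiv.removeNone (finSuccEquivLast.symm.trans (π.trans (finSuccEquiv' (π (Fin.last _)))))

@[simp] lemma insertLast_last (σ : Perm (Fin (n + 1))) (d : Fin (n + 2)) :
    σ.insertLast d (Fin.last _) = d := by
  simp [insertLast, finSuccEquivLast_last]

@[simp] lemma insertLast_castSucc (σ : Perm (Fin (n + 1))) (d : Fin (n + 2)) (p : Fin (n + 1)) :
    σ.insertLast d p.castSucc = d.succAbove (σ p) := by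
  simp [insertLast, finSuccEquivLast_castSucc]

lemma succAbove_eraseLast (π : Perm (Fin (n + 2))) (p : Fin (n + 1)) :
    (π (Fin.last _)).succAbove (π.eraseLast p) = π p.castSucc := by
  set e := finSuccEquivLast.symm.trans (π.trans (finSuccEquiv' (π (Fin.last _))))
  have hsome : ∃ x, e (some p) = some x := by
    rcases h : e (some p) with _ | x
    · have hnone : e none = none := by simp [e, finSuccEquiv'_at]
      simpa using e.injective (h.trans hnone.symm)
    · exact ⟨x, rfl⟩
  have h := congrArg (finSuccEquiv' (π (Fin.last _))).symm (removeNone_some e hsome)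
  simp only [e, Equiv.trans_apply, finSuccEquivLast_symm_some, Equiv.symm_apply_apply,
    finSuccEquiv'_symm_some] at h
  exact h

lemma insertLast_eraseLast (π : Perm (Fin (n + 2))) :
    π.eraseLast.insertLast (π (Fin.last _)) = π := by
  ext x
  rcases Fin.eq_castSucc_or_eq_last x with ⟨p, rfl⟩ | rfl
  · rw [insertLast_castSucc, succAbove_eraseLast]
  · rw [insertLast_last]

lemma insertLast_left_injective (d : Fin (n + 2)) :
    Function.Injective fun σ : Perm (Fin (n + 1)) => σ.insertLast d := by
  intro σ τ h
  ext p
  have hp := congrArg (fun π : Perm (Fin (n + 2)) => π p.castSucc) h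
  simp only [insertLast_castSucc] at hp
  rw [Fin.succAbove_right_injective hp]

lemma eraseLast_insertLast (σ : Perm (Fin (n + 1))) (d : Fin (n + 2)) :
    (σ.insertLast d).eraseLast = σ := by
  apply insertLast_left_injective d
  simpa using insertLast_eraseLast (σ.insertLast d)

lemma mem_DesSet_insertLast (σ : Perm (Fin (n + 1))) (d : Fin (n + 2)) (j : ℕ) :
    j ∈ DesSet (σ.insertLast d) ↔
      j ∈ DesSet σ ∨ j = n + 1 ∧ d ≤ (σ (Fin.last n)).castSucc := by
  simp only [mem_DesSet_iff, Fin.exists_fin_succ', Fin.succ_castSucc, insertLast_castSucc,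
    Fin.succ_last, insertLast_last, Fin.succAbove_lt_succAbove_iff,
    Fin.lt_succAbove_iff_le_castSucc, Fin.val_castSucc, Fin.val_last]
  grind

lemma DesSet_insertLast {σ : Perm (Fin (n + 1))} {d : Fin (n + 2)}
    (h : (σ (Fin.last n)).castSucc < d) : DesSet (σ.insertLast d) = DesSet σ := by
  ext j
  simp [mem_DesSet_insertLast, not_le.2 h]

lemma castSucc_lt_of_not_mem_DesSet_insertLast {σ : Perm (Fin (n + 1))} {d : Fin (n + 2)}
    (h : n + 1 ∉ DesSet (σ.insertLast d)) : (σ (Fin.last n)).castSucc < d :=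
  not_le.1 fun hle => h ((mem_DesSet_insertLast σ d _).2 (Or.inr ⟨rfl, hle⟩))

lemma invNum_insertLast (σ : Perm (Fin (n + 1))) (d : Fin (n + 2)) :
    invNum (σ.insertLast d) = invNum σ + (n + 1 - d) := by
  have hrow (i : Fin (n + 1)) :
      ∑ j : Fin (n + 2), (if i.castSucc < j ∧ σ.insertLast d j < σ.insertLast d i.castSucc
        then 1 else 0) =
      ∑ j : Fin (n + 1), (if i < j ∧ σ j < σ i then 1 else 0) +
        if d < d.succAbove (σ i) then 1 else 0 := by
    rw [Fin.sum_univ_castSucc]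
    simp only [insertLast_castSucc, insertLast_last, Fin.castSucc_lt_castSucc_iff,
      Fin.succAbove_lt_succAbove_iff, Fin.castSucc_lt_last, true_and]
  have hcount : ∑ i : Fin (n + 1), (if d < d.succAbove (σ i) then 1 else 0) = n + 1 - d := by
    rw [Equiv.sum_comp σ fun y => if d < d.succAbove y then 1 else 0, ← card_filter]
    have hc := card_filter_add_card_filter_not (s := univ)
      (p := fun y : Fin (n + 1) => (y : ℕ) < d)
    simp only [Fin.lt_succAbove_iff_le_castSucc, Fin.le_def, Fin.val_castSucc, not_lt] at hc ⊢
    rw [Fin.card_filter_val_lt, card_univ, Fintype.card_fin] at hc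
    omega
  simp only [invNum, card_filter, Fintype.sum_prod_type]
  rw [Fin.sum_univ_castSucc]
  simp only [hrow, sum_add_distrib, hcount, not_lt.2 (Fin.le_last _), false_and,
    if_false, sum_const_zero, add_zero]

end Equiv.Perm

def qChoose : ℕ → ℕ → Polynomial ℝ
  | _, 0 => 1
  | 0, _ + 1 => 0
  | n + 1, k + 1 => X ^ (k + 1) * qChoose n (k + 1) + qChoose n k

@[simp] lemma qChoose_zero_right (n : ℕ) : qChoose n 0 = 1 := by
  cases n <;> rfl

lemma qChoose_succ_succ (n k : ℕ) :
    qChoose (n + 1) (k + 1) = X ^ (k + 1) * qChoose n (k + 1) + qChoose n k := rfl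

lemma qChoose_eq_zero_of_lt : ∀ {n k : ℕ}, n < k → qChoose n k = 0
  | 0, _ + 1, _ => rfl
  | n + 1, k + 1, h => by
    rw [qChoose_succ_succ, qChoose_eq_zero_of_lt (by omega), qChoose_eq_zero_of_lt (by omega),
      mul_zero, add_zero]

lemma qChoose_mul_qFactorial_mul_qFactorial :
    ∀ {n k : ℕ}, k ≤ n → qChoose n k * (qFactorial k * qFactorial (n - k)) = qFactorial n
  | n, 0, _ => by simp [qFactorial]
  | n + 1, k + 1, h => by
    have hleft : qChoose n (k + 1) * (qFactorial (k + 1) * qFactorial (n - k)) =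
        qFactorial n * qNum (n - k) := by
      rcases Nat.lt_or_ge k n with hk | hk
      · have ih := qChoose_mul_qFactorial_mul_qFactorial (show k + 1 ≤ n by omega)
        rw [show n - k = n - (k + 1) + 1 by omega,
          show qFactorial (n - (k + 1) + 1) = qFactorial (n - (k + 1)) * qNum (n - (k + 1) + 1)
            from rfl]
        linear_combination qNum (n - (k + 1) + 1) * ih
      · rw [qChoose_eq_zero_of_lt (by omega), show n - k = 0 by omega, qNum, sum_range_zero,
          zero_mul, mul_zero]
    have hright : qChoose n k * (qFactorial (k + 1) * qFactorial (n - k)) =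
        qFactorial n * qNum (k + 1) := by
      have ih := qChoose_mul_qFactorial_mul_qFactorial (show k ≤ n by omega)
      rw [show qFactorial (k + 1) = qFactorial k * qNum (k + 1) from rfl]
      linear_combination qNum (k + 1) * ih
    calc qChoose (n + 1) (k + 1) * (qFactorial (k + 1) * qFactorial (n + 1 - (k + 1)))
        = X ^ (k + 1) * (qFactorial n * qNum (n - k)) + qFactorial n * qNum (k + 1) := by
          rw [qChoose_succ_succ, Nat.add_sub_add_right, ← hleft, ← hright]
          ring
      _ = qFactorial n * qNum (n + 1) := by
          rw [show n + 1 = (k + 1) + (n - k) by omega, qNum_add (k + 1)]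
          ring
      _ = qFactorial (n + 1) := rfl

lemma qChoose_eq_qBinom {n k : ℕ} (h : k ≤ n) : qChoose n k = qBinom n k := by
  have hmonic := (qFactorial_monic k).mul (qFactorial_monic (n - k))
  rw [qBinom, ← qChoose_mul_qFactorial_mul_qFactorial h, divByMonic_eq_div _ hmonic,
    mul_div_cancel_right₀ _ hmonic.ne_zero]

section DesLast

variable (S : Finset ℕ)

/-- `DpolyLast S n v` and `DpolyLastLt S n V` refine `Dpoly S (n + 1)` by the last entry: it is `v`,
resp. at most `V`, in one-line notation (`π (Fin.last n)` itself is `0`-indexed). -/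
def DpolyLast (n v : ℕ) : Polynomial ℝ :=
  ∑ π ∈ univ.filter (fun π : Equiv.Perm (Fin (n + 1)) =>
      DesSet π = S ∧ (π (Fin.last n) : ℕ) + 1 = v), X ^ invNum π

def DpolyLastLt (n V : ℕ) : Polynomial ℝ :=
  ∑ π ∈ univ.filter (fun π : Equiv.Perm (Fin (n + 1)) =>
      DesSet π = S ∧ (π (Fin.last n) : ℕ) < V), X ^ invNum π

lemma sum_DpolyLast (n V : ℕ) : ∑ v ∈ Icc 1 V, DpolyLast S n v = DpolyLastLt S n V := by
  rw [DpolyLastLt, ← sum_fiberwise_of_maps_to (g := fun π : Equiv.Perm (Fin (n + 1)) =>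
    (π (Fin.last n) : ℕ) + 1) (t := Icc 1 V) 
    fun π hπ => mem_Icc.2 ⟨by omega, by have := (mem_filter.1 hπ).2.2; omega⟩]
  refine sum_congr rfl fun v hv => ?_
  rw [DpolyLast, filter_filter]
  refine sum_congr (filter_congr fun π _ => ?_) fun _ _ => rfl
  rw [mem_Icc] at hv
  constructor
  · rintro ⟨hDes, rfl⟩; exact ⟨⟨hDes, by omega⟩, rfl⟩
  · rintro ⟨⟨hDes, -⟩, rfl⟩; exact ⟨hDes, rfl⟩

lemma DpolyLast_succ {n V : ℕ} (hS : n + 1 ∉ S) (hV : V ≤ n + 1) :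
    DpolyLast S (n + 1) (V + 1) = X ^ (n + 1 - V) * DpolyLastLt S n V := by
  set d : Fin (n + 2) := ⟨V, by omega⟩
  have hlast {π : Equiv.Perm (Fin (n + 2))} (h : (π (Fin.last _) : ℕ) + 1 = V + 1) :
      π.eraseLast.insertLast d = π := by
    rw [show d = π (Fin.last _) from Fin.ext (show V = _ by omega),
      Equiv.Perm.insertLast_eraseLast]
  rw [DpolyLast, DpolyLastLt, mul_sum]
  refine sum_bij' (fun π _ => π.eraseLast) (fun σ _ => σ.insertLast d) ?_ ?_
    (fun π hπ => hlast (mem_filter.1 hπ).2.2) (fun σ _ => σ.eraseLast_insertLast d) ?_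
  · intro π hπ
    simp only [mem_filter, mem_univ, true_and] at hπ ⊢
    obtain ⟨hDes, hπlast⟩ := hπ
    rw [← hlast hπlast] at hDes
    have hlt := Equiv.Perm.castSucc_lt_of_not_mem_DesSet_insertLast (hDes ▸ hS)
    exact ⟨Equiv.Perm.DesSet_insertLast hlt ▸ hDes, Fin.lt_def.1 hlt⟩
  · intro σ hσ
    simp only [mem_filter, mem_univ, true_and] at hσ ⊢
    obtain ⟨hDes, hσlast⟩ := hσ
    have hlt : (σ (Fin.last n)).castSucc < d := Fin.lt_def.2 hσlast
    exact ⟨(Equiv.Perm.DesSet_insertLast hlt).trans hDes, by simp [d]⟩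
  · intro π hπ
    conv_lhs => rw [← hlast (mem_filter.1 hπ).2.2]
    rw [Equiv.Perm.invNum_insertLast, pow_add, mul_comm]

lemma DpolyLastLt_succ_succ {n V : ℕ} (hS : n + 1 ∉ S) (hV : V ≤ n + 1) :
    DpolyLastLt S (n + 1) (V + 1) =
      DpolyLastLt S (n + 1) V + X ^ (n + 1 - V) * DpolyLastLt S n V := by
  rw [← sum_DpolyLast, sum_Icc_succ_top (by omega), sum_DpolyLast,
    DpolyLast_succ S hS hV]

lemma DpolyLastLt_eq_sum_qChoose {m : ℕ} (hS : ∀ s ∈ S, s ≤ m) (r : ℕ) {V : ℕ} (hV : V ≤ m) :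
    DpolyLastLt S (m + r) V =
      X ^ (r * (r + 1) + r * (m - V)) * ∑ i ∈ Icc 1 V, qChoose (V - i) r * DpolyLast S m i := by
  induction r generalizing V with
  | zero => simp [sum_DpolyLast]
  | succ r ihr =>
    induction V with
    | zero => simp [← sum_DpolyLast]
    | succ V ihV =>
      obtain ⟨c, rfl⟩ : ∃ c, m = V + 1 + c := ⟨m - (V + 1), by omega⟩
      have hS' : V + 1 + c + r + 1 ∉ S := fun h => by have := hS _ h; omega
      have hpascal : ∀ i ∈ Icc 1 V, qChoose (V + 1 - i) (r + 1) * DpolyLast S (V + 1 + c) i =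
          X ^ (r + 1) * (qChoose (V - i) (r + 1) * DpolyLast S (V + 1 + c) i) +
            qChoose (V - i) r * DpolyLast S (V + 1 + c) i := fun i hi => by
        rw [show V + 1 - i = V - i + 1 by have := mem_Icc.1 hi; omega, qChoose_succ_succ]
        ring
      rw [show V + 1 + c + (r + 1) = V + 1 + c + r + 1 from rfl] at ihV ⊢
      rw [DpolyLastLt_succ_succ S hS' (by omega), ihV (by omega), ihr (by omega),
        sum_Icc_succ_top (by omega), Nat.sub_self, qChoose_eq_zero_of_lt r.succ_pos, zero_mul,
        add_zero, sum_congr rfl hpascal, sum_add_distrib, ← mul_sum,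
        show V + 1 + c + r + 1 - V = c + r + 2 by omega, show V + 1 + c - V = c + 1 by omega,
        show V + 1 + c - (V + 1) = c by omega]
      ring

end DesLast

theorem stmt8_general (S : Finset ℕ) (hS : S.Nonempty)
    (m : ℕ) (hm : m = S.max' hS)
    (a b : ℕ → Polynomial ℝ)
    (ha : ∀ j, 1 ≤ j → j ≤ m →
      a j = ∑ π ∈ Finset.univ.filter (fun π : Equiv.Perm (Fin (m + j)) =>
          DesSet π = S ∧ ∀ v ∈ Finset.Icc (m + 1) (m + j),
            ∃ i : Fin (m + j), (i : ℕ) < m ∧ (π i : ℕ) + 1 = v),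
        X ^ invNum π)
    (hb : ∀ j, 1 ≤ j → j ≤ m →
      b j = ∑ π ∈ Finset.univ.filter (fun π : Equiv.Perm (Fin (m + 1)) =>
          DesSet π = S ∧ (π (Fin.last m) : ℕ) + 1 = j),
        X ^ invNum π)
    (k : ℕ) (hk1 : 1 ≤ k) (hk2 : k ≤ m) :
    a k = X ^ (k * (k - 1)) *
      ∑ i ∈ Finset.Icc 1 (m - k + 1), qBinom (m - i) (k - 1) * b i := by
  have hSm : ∀ s ∈ S, s ≤ m := fun s hs => hm ▸ S.le_max' s hs
  obtain ⟨r, rfl⟩ : ∃ r, k = r + 1 := ⟨k - 1, by omega⟩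
  have hak : a (r + 1) = DpolyLastLt S (m + r) m := by
    rw [ha _ hk1 hk2]
    exact sum_congr (filter_congr fun π _ =>
      and_congr_right fun hDes => forall_top_mem_prefix_iff π (hDes ▸ hSm)) fun _ _ => rfl
  have hvanish : ∀ i ∈ Icc 1 m, i ∉ Icc 1 (m - r) → qChoose (m - i) r * DpolyLast S m i = 0 :=
    fun i hi hi' => by
      simp only [mem_Icc] at hi hi'
      rw [qChoose_eq_zero_of_lt (by omega), zero_mul]
  rw [hak, DpolyLastLt_eq_sum_qChoose S hSm r le_rfl, Nat.sub_self, mul_zero, add_zero,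
    Nat.add_sub_cancel, mul_comm (r + 1), show m - (r + 1) + 1 = m - r by omega,
    ← sum_subset (Icc_subset_Icc_right (Nat.sub_le m r)) hvanish]
  congr 1
  refine sum_congr rfl fun i hi => ?_
  rw [mem_Icc] at hi
  rw [qChoose_eq_qBinom (by omega), hb i (by omega) (by omega)]
  rfl

/-- relation between the coefficients `a_k(S;q)` and `b_i(S;q)`:
`a_k(S;q) = q^{k(k-1)} Σ_{i=1}^{m-k+1} [m-i choose k-1]_q b_i(S;q)`. -/
theorem stmt8 (S : Finset ℕ) (hS : S.Nonempty) (hpos : ∀ s ∈ S, 0 < s)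
    (m : ℕ) (hm : m = S.max' hS)
    (a b : ℕ → Polynomial ℝ)
    (ha : ∀ j, 1 ≤ j → j ≤ m →
      a j = ∑ π ∈ Finset.univ.filter (fun π : Equiv.Perm (Fin (m + j)) =>
          DesSet π = S ∧ ∀ v ∈ Finset.Icc (m + 1) (m + j),
            ∃ i : Fin (m + j), (i : ℕ) < m ∧ (π i : ℕ) + 1 = v),
        X ^ invNum π)
    (hb : ∀ j, 1 ≤ j → j ≤ m →
      b j = ∑ π ∈ Finset.univ.filter (fun π : Equiv.Perm (Fin (m + 1)) =>
          DesSet π = S ∧ (π (Fin.last m) : ℕ) + 1 = j),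
        X ^ invNum π)
    (k : ℕ) (hk1 : 1 ≤ k) (hk2 : k ≤ m) :
    a k = X ^ (k * (k - 1)) *
      ∑ i ∈ Finset.Icc 1 (m - k + 1), qBinom (m - i) (k - 1) * b i :=
  stmt8_general S hS m hm a b ha hb k hk1 hk2

end
end
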